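/- arXiv:2112.13482 — 3 statements merged into one kernel-verified Lean document; each statement's English description precedes it below -/
import Mathlib

section
/- Let q be a complex number with |q| < 1. Then ∑_{n=0}^{∞} q^{2n²} · ∏_{j=1}^{n} (1 + 3q^{2j−1} + q^{4j−2}) / (q²;q²)_{2n} = (1/(q²;q²)_∞) · (1 + ∑_{n=1}^{∞} q^{3n²} (F_{2n+1} + F_{2n−1})). -/
open Finset

/-- Finite q-Pochhammer symbol `(a;q)_n = ∏_{i=0}^{n-1} (1 - a q^i)`. -/
noncomputable def qPoch (a q : ℂ) (n : ℕ) : ℂ := ∏ i ∈ Finset.range n, (1 - a * q ^ i)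

/-- Infinite q-Pochhammer symbol `(a;q)_∞ = ∏_{i=0}^{∞} (1 - a q^i)`. -/
noncomputable def qPochInf (a q : ℂ) : ℂ := ∏' i : ℕ, (1 - a * q ^ i)

/-- Chebyshev polynomials of the third kind, evaluated at `x : ℂ`. -/
noncomputable def chebV : ℕ → ℂ → ℂ
  | 0, _ => 1
  | 1, x => 2 * x - 1
  | (n + 2), x => 2 * x * chebV (n + 1) x - chebV n x

/-- `V_n(x) + V_{n-1}(x)`, with the convention `V_{-1}(x) = 0`. -/
noncomputable def chebVpair (n : ℕ) (x : ℂ) : ℂ :=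
  chebV n x + if n = 0 then 0 else chebV (n - 1) x

/-- Gaussian binomial coefficient `[m choose k]_q`. -/
noncomputable def gauss (q : ℂ) (m k : ℕ) : ℂ :=
  qPoch q q m / (qPoch q q k * qPoch q q (m - k))

open Filter Topology

namespace Stmt5

/-- (x;x)_n -/
noncomputable def P (x : ℂ) (n : ℕ) : ℂ := ∏ i ∈ Finset.range n, (1 - x ^ (i + 1))

lemma qPoch_eq_P (x : ℂ) (n : ℕ) : qPoch x x n = P x n := by
  unfold qPoch P
  exact Finset.prod_congr rfl fun i _ => by rw [pow_succ']

lemma P_succ (x : ℂ) (n : ℕ) : P x (n + 1) = P x n * (1 - x ^ (n + 1)) := by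
  unfold P; rw [Finset.prod_range_succ]

lemma P_zero (x : ℂ) : P x 0 = 1 := rfl

lemma P_ne_zero {x : ℂ} (hx : ‖x‖ < 1) (n : ℕ) : P x n ≠ 0 := by
  unfold P
  refine Finset.prod_ne_zero_iff.2 fun i _ => ?_
  intro h
  have h1 : x ^ (i + 1) = 1 := (sub_eq_zero.mp h).symm
  have h2 : ‖x ^ (i + 1)‖ < 1 := by
    rw [norm_pow]
    calc ‖x‖ ^ (i + 1) ≤ ‖x‖ ^ 1 := by
          apply pow_le_pow_of_le_one (norm_nonneg x) hx.le; omega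
      _ = ‖x‖ := pow_one _
      _ < 1 := hx
  rw [h1] at h2; simp at h2

/-- Gaussian binomial coefficient, zero out of range. -/
noncomputable def Gb (x : ℂ) (n k : ℕ) : ℂ :=
  if k ≤ n then P x n / (P x k * P x (n - k)) else 0

lemma Gb_eq_zero (x : ℂ) {n k : ℕ} (h : n < k) : Gb x n k = 0 := by
  unfold Gb; rw [if_neg (by omega)]

lemma Gb_zero {x : ℂ} (hx : ‖x‖ < 1) (n : ℕ) : Gb x n 0 = 1 := by
  unfold Gb
  rw [if_pos (Nat.zero_le n), P_zero, one_mul, Nat.sub_zero]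
  exact div_self (P_ne_zero hx n)

lemma Gb_self {x : ℂ} (hx : ‖x‖ < 1) (n : ℕ) : Gb x n n = 1 := by
  unfold Gb
  rw [if_pos le_rfl, Nat.sub_self, P_zero, mul_one]
  exact div_self (P_ne_zero hx n)

lemma Gb_symm {x : ℂ} {n k : ℕ} (h : k ≤ n) : Gb x n (n - k) = Gb x n k := by
  unfold Gb
  rw [if_pos (Nat.sub_le n k), if_pos h, Nat.sub_sub_self h, mul_comm]

lemma Gb_mul_P {x : ℂ} (hx : ‖x‖ < 1) {n k : ℕ} (h : k ≤ n) :
    Gb x n k * (P x k * P x (n - k)) = P x n := by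
  unfold Gb
  rw [if_pos h, div_mul_cancel₀]
  exact mul_ne_zero (P_ne_zero hx k) (P_ne_zero hx (n - k))

private lemma auxA {Pn Pk Pm A B : ℂ} (hPk : Pk ≠ 0) (hPm : Pm ≠ 0)
    (hA : 1 - A ≠ 0) (hB : 1 - B ≠ 0) :
    Pn * (1 - A * B) / (Pk * (1 - A) * (Pm * (1 - B))) =
      Pn / (Pk * (1 - A) * Pm) + B * (Pn / (Pk * (Pm * (1 - B)))) := by
  field_simp
  ring

private lemma auxB {Pn Pk Pm A B : ℂ} (hPk : Pk ≠ 0) (hPm : Pm ≠ 0)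
    (hA : 1 - A ≠ 0) (hB : 1 - B ≠ 0) :
    Pn * (1 - A * B) / (Pk * (1 - A) * (Pm * (1 - B))) =
      A * (Pn / (Pk * (1 - A) * Pm)) + Pn / (Pk * (Pm * (1 - B))) := by
  field_simp
  ring

lemma one_sub_pow_ne {x : ℂ} (hx : ‖x‖ < 1) (m : ℕ) : (1 : ℂ) - x ^ (m + 1) ≠ 0 := by
  have := P_ne_zero hx (m + 1)
  rw [P_succ] at this
  exact right_ne_zero_of_mul this

/-- Pascal A : G(n+1,k+1) = G(n,k+1) + x^(n-k) G(n,k) -/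
lemma pascA {x : ℂ} (hx : ‖x‖ < 1) (n k : ℕ) :
    Gb x (n + 1) (k + 1) = Gb x n (k + 1) + x ^ (n - k) * Gb x n k := by
  rcases le_or_gt (k + 1) n with h | h
  · unfold Gb
    rw [if_pos (by omega), if_pos h, if_pos (by omega)]
    have e1 : n + 1 - (k + 1) = n - k := by omega
    have e2 : n - (k + 1) = n - k - 1 := by omega
    rw [e1, e2]
    have hk1 : P x (k + 1) = P x k * (1 - x ^ (k + 1)) := P_succ x k
    have hnk : P x (n - k) = P x (n - k - 1) * (1 - x ^ (n - k - 1 + 1)) := by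
      conv_lhs => rw [show n - k = n - k - 1 + 1 by omega]
      exact P_succ x _
    have hB : x ^ (n - k) = x ^ (n - k - 1 + 1) := by congr 1; omega
    have hn1 : P x (n + 1) = P x n * (1 - x ^ (k + 1) * x ^ (n - k - 1 + 1)) := by
      rw [P_succ, ← pow_add]
      congr 3
      omega
    rw [hn1, hk1, hnk, hB]
    exact auxA (P_ne_zero hx k) (P_ne_zero hx (n - k - 1))
      (one_sub_pow_ne hx k) (one_sub_pow_ne hx (n - k - 1))
  · rcases Nat.eq_or_lt_of_le h with h' | h'
    · have hk : k = n := by omega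
      subst hk
      rw [Gb_self hx, Gb_eq_zero x (by omega), Gb_self hx]
      simp
    · rw [Gb_eq_zero x (by omega), Gb_eq_zero x (by omega), Gb_eq_zero x (by omega)]
      simp

/-- Pascal B : G(n+1,k+1) = x^(k+1) G(n,k+1) + G(n,k) -/
lemma pascB {x : ℂ} (hx : ‖x‖ < 1) (n k : ℕ) :
    Gb x (n + 1) (k + 1) = x ^ (k + 1) * Gb x n (k + 1) + Gb x n k := by
  rcases le_or_gt (k + 1) n with h | h
  · unfold Gb
    rw [if_pos (by omega), if_pos h, if_pos (by omega)]
    have e1 : n + 1 - (k + 1) = n - k := by omega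
    have e2 : n - (k + 1) = n - k - 1 := by omega
    rw [e1, e2]
    have hk1 : P x (k + 1) = P x k * (1 - x ^ (k + 1)) := P_succ x k
    have hnk : P x (n - k) = P x (n - k - 1) * (1 - x ^ (n - k - 1 + 1)) := by
      conv_lhs => rw [show n - k = n - k - 1 + 1 by omega]
      exact P_succ x _
    have hn1 : P x (n + 1) = P x n * (1 - x ^ (k + 1) * x ^ (n - k - 1 + 1)) := by
      rw [P_succ, ← pow_add]
      congr 3
      omega
    rw [hn1, hk1, hnk]
    exact auxB (P_ne_zero hx k) (P_ne_zero hx (n - k - 1))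
      (one_sub_pow_ne hx k) (one_sub_pow_ne hx (n - k - 1))
  · rcases Nat.eq_or_lt_of_le h with h' | h'
    · have hk : k = n := by omega
      subst hk
      rw [Gb_self hx, Gb_eq_zero x (by omega), Gb_self hx]
      simp
    · rw [Gb_eq_zero x (by omega), Gb_eq_zero x (by omega), Gb_eq_zero x (by omega)]
      simp

/-- Weierstrass-type inequality. -/
lemma weier (f : ℕ → ℝ) (hf0 : ∀ i, 0 ≤ f i) (hf1 : ∀ i, f i ≤ 1) (s : Finset ℕ) :
    1 - ∑ i ∈ s, f i ≤ ∏ i ∈ s, (1 - f i) := by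
  classical
  induction s using Finset.cons_induction with
  | empty => simp
  | cons j s hj ih =>
    rw [Finset.prod_cons, Finset.sum_cons]
    have h1 : (0:ℝ) ≤ 1 - f j := by linarith [hf1 j]
    have h2 : ∏ i ∈ s, (1 - f i) ≤ 1 := by
      apply Finset.prod_le_one
      · intro i _; linarith [hf1 i]
      · intro i _; linarith [hf0 i]
    have h3 : (0:ℝ) ≤ ∑ i ∈ s, f i := Finset.sum_nonneg fun i _ => hf0 i
    nlinarith [mul_nonneg (hf0 j) h3, mul_le_mul_of_nonneg_left ih h1]


section Analytic

variable {x : ℂ} (hx : ‖x‖ < 1)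

lemma prod_lower (hx : ‖x‖ < 1) : ∃ c > 0, ∀ n : ℕ, c ≤ ∏ i ∈ range n, (1 - ‖x‖ ^ (i + 1)) := by
  set a := ‖x‖ with ha
  have ha0 : 0 ≤ a := norm_nonneg x
  have hfac0 : ∀ i : ℕ, 0 < 1 - a ^ (i + 1) := by
    intro i
    have : a ^ (i + 1) ≤ a ^ 1 := pow_le_pow_of_le_one ha0 hx.le (by omega)
    simp only [pow_one] at this
    linarith
  have hsumm : Summable (fun i : ℕ => a ^ (i + 1)) := by
    apply Summable.comp_injective (summable_geometric_of_lt_one ha0 hx)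
    exact fun i j h => by omega
  -- choose M with tail sum ≤ 1/2
  obtain ⟨M, hM⟩ : ∃ M : ℕ, ∑' i : ℕ, a ^ (i + M + 1) ≤ 1 / 2 := by
    have htail : Tendsto (fun M : ℕ => ∑' i : ℕ, a ^ (i + M + 1)) atTop (𝓝 0) := by
      have heq : ∀ M : ℕ, ∑' i : ℕ, a ^ (i + M + 1) = a ^ (M + 1) * (1 - a)⁻¹ := by
        intro M
        have : ∀ i : ℕ, a ^ (i + M + 1) = a ^ (M + 1) * a ^ i := fun i => by
          rw [← pow_add]; ring_nf
        rw [tsum_congr this, tsum_mul_left, tsum_geometric_of_lt_one ha0 hx]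
      simp only [heq]
      have h1 : Tendsto (fun M : ℕ => a ^ (M + 1)) atTop (𝓝 0) :=
        (tendsto_pow_atTop_nhds_zero_of_lt_one ha0 hx).comp (tendsto_add_atTop_nat 1)
      simpa using h1.mul_const (1 - a)⁻¹
    have := htail.eventually_le_const (show (0:ℝ) < 1/2 by norm_num)
    exact this.exists
  refine ⟨(∏ i ∈ range M, (1 - a ^ (i + 1))) * (1 / 2),
      mul_pos (Finset.prod_pos fun i _ => hfac0 i) (by norm_num), fun n => ?_⟩
  rcases le_or_gt n M with h | h
  · have h1 : ∏ i ∈ range M, (1 - a ^ (i + 1)) ≤ ∏ i ∈ range n, (1 - a ^ (i + 1)) := by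
      rw [← Finset.prod_range_mul_prod_Ico _ h]
      have h2 : ∏ i ∈ Finset.Ico n M, (1 - a ^ (i + 1)) ≤ 1 := by
        apply Finset.prod_le_one
        · intro i _; linarith [hfac0 i]
        · intro i _; nlinarith [pow_nonneg ha0 (i + 1), hfac0 i]
      nlinarith [Finset.prod_pos (fun i (_ : i ∈ range n) => hfac0 i),
        Finset.prod_pos (fun i (_ : i ∈ Finset.Ico n M) => hfac0 i)]
    nlinarith [Finset.prod_pos (fun i (_ : i ∈ range M) => hfac0 i)]
  · rw [← Finset.prod_range_mul_prod_Ico _ h.le]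
    have h2 : 1 - ∑ i ∈ Finset.Ico M n, a ^ (i + 1) ≤ ∏ i ∈ Finset.Ico M n, (1 - a ^ (i + 1)) := by
      apply weier
      · intro i; positivity
      · intro i; nlinarith [hfac0 i]
    have h3 : ∑ i ∈ Finset.Ico M n, a ^ (i + 1) ≤ 1 / 2 := by
      refine le_trans ?_ hM
      have heq : ∑ i ∈ Finset.Ico M n, a ^ (i + 1) = ∑ i ∈ range (n - M), a ^ (i + M + 1) := by
        rw [Finset.sum_Ico_eq_sum_range]
        exact Finset.sum_congr rfl (fun i _ => by ring_nf)
      have hsumm2 : Summable (fun i : ℕ => a ^ (i + M + 1)) := by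
        apply Summable.comp_injective (summable_geometric_of_lt_one ha0 hx)
        exact fun i j hij => by omega
      rw [heq]
      exact hsumm2.sum_le_tsum _ (fun i _ => by positivity)
    have h4 : (1:ℝ)/2 ≤ ∏ i ∈ Finset.Ico M n, (1 - a ^ (i + 1)) := by linarith
    have h5 : (0:ℝ) < ∏ i ∈ range M, (1 - a ^ (i + 1)) :=
      Finset.prod_pos (fun i _ => hfac0 i)
    nlinarith

lemma P_norm_lower (hx : ‖x‖ < 1) : ∃ c > 0, ∀ n : ℕ, c ≤ ‖P x n‖ := by
  obtain ⟨c, hc, hcle⟩ := prod_lower hx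
  refine ⟨c, hc, fun n => le_trans (hcle n) ?_⟩
  unfold P
  rw [norm_prod]
  apply Finset.prod_le_prod
  · intro i _
    have : ‖x‖ ^ (i + 1) ≤ ‖x‖ ^ 1 := pow_le_pow_of_le_one (norm_nonneg x) hx.le (by omega)
    simp only [pow_one] at this
    linarith
  · intro i _
    calc 1 - ‖x‖ ^ (i + 1) = ‖(1:ℂ)‖ - ‖x ^ (i + 1)‖ := by simp
      _ ≤ ‖1 - x ^ (i + 1)‖ := norm_sub_norm_le _ _

lemma P_norm_upper (hx : ‖x‖ < 1) (n : ℕ) : ‖P x n‖ ≤ Real.exp ((1 - ‖x‖)⁻¹) := by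
  set a := ‖x‖ with ha
  have ha0 : 0 ≤ a := norm_nonneg x
  unfold P
  rw [norm_prod]
  have h1 : ∀ i ∈ range n, ‖1 - x ^ (i + 1)‖ ≤ Real.exp (a ^ (i + 1)) := by
    intro i _
    calc ‖1 - x ^ (i + 1)‖ ≤ ‖(1:ℂ)‖ + ‖x ^ (i + 1)‖ := norm_sub_le _ _
      _ = a ^ (i + 1) + 1 := by simp [ha]; ring
      _ ≤ Real.exp (a ^ (i + 1)) := Real.add_one_le_exp _
  calc ∏ i ∈ range n, ‖1 - x ^ (i + 1)‖ ≤ ∏ i ∈ range n, Real.exp (a ^ (i + 1)) := by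
        apply Finset.prod_le_prod (fun i _ => norm_nonneg _) h1
    _ = Real.exp (∑ i ∈ range n, a ^ (i + 1)) := by rw [Real.exp_sum]
    _ ≤ Real.exp ((1 - a)⁻¹) := by
        apply Real.exp_le_exp.2
        have hsumm2 : Summable (fun i : ℕ => a ^ (i + 1)) := by
          apply Summable.comp_injective (summable_geometric_of_lt_one ha0 hx)
          exact fun i j hij => by omega
        calc ∑ i ∈ range n, a ^ (i + 1) ≤ ∑' i : ℕ, a ^ (i + 1) :=
              hsumm2.sum_le_tsum _ (fun i _ => by positivity)
          _ ≤ ∑' i : ℕ, a ^ i := by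
              apply hsumm2.tsum_le_tsum _ (summable_geometric_of_lt_one ha0 hx)
              intro i
              exact pow_le_pow_of_le_one ha0 hx.le (by omega)
          _ = (1 - a)⁻¹ := tsum_geometric_of_lt_one ha0 hx

lemma hasProd_qPochInf (hx : ‖x‖ < 1) :
    HasProd (fun i : ℕ => 1 - x * x ^ i) (qPochInf x x) := by
  have hne : ∀ i : ℕ, (1 : ℂ) - x * x ^ i ≠ 0 := by
    intro i
    rw [← pow_succ']
    exact one_sub_pow_ne hx i
  have hlog : Summable (fun i : ℕ => Complex.log (1 - x * x ^ i)) := by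
    set a := ‖x‖ with ha
    have ha0 : 0 ≤ a := norm_nonneg x
    apply Summable.of_norm_bounded
      (g := fun i : ℕ => (a * (1 - a)⁻¹ / 2 + 1) * a ^ (i + 1))
    · apply Summable.mul_left
      apply Summable.comp_injective (summable_geometric_of_lt_one ha0 hx)
      exact fun i j hij => by omega
    · intro i
      have hz : ‖-(x ^ (i + 1))‖ < 1 := by
        rw [norm_neg, norm_pow]
        calc a ^ (i + 1) ≤ a ^ 1 := pow_le_pow_of_le_one ha0 hx.le (by omega)
          _ = a := pow_one a
          _ < 1 := hx
      have h2 : (1 : ℂ) - x * x ^ i = 1 + -(x ^ (i + 1)) := by rw [← pow_succ']; ring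
      rw [h2]
      refine le_trans (Complex.norm_log_one_add_le hz) ?_
      rw [norm_neg, norm_pow, ← ha]
      have hai : a ^ (i + 1) ≤ a := by
        calc a ^ (i + 1) ≤ a ^ 1 := pow_le_pow_of_le_one ha0 hx.le (by omega)
          _ = a := pow_one a
      have h3 : (1 - a ^ (i + 1))⁻¹ ≤ (1 - a)⁻¹ := by
        apply inv_anti₀ (by linarith) (by linarith)
      have h4 : (a ^ (i + 1)) ^ 2 * (1 - a ^ (i + 1))⁻¹ / 2 ≤ a ^ (i + 1) * (a * (1 - a)⁻¹) / 2 := by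
        have h5 : (a ^ (i + 1)) ^ 2 = a ^ (i + 1) * a ^ (i + 1) := sq (a ^ (i + 1)) ▸ by ring
        have h6 : (0:ℝ) ≤ a ^ (i+1) := by positivity
        have h7 : (0:ℝ) ≤ (1 - a ^ (i + 1))⁻¹ := by
          apply inv_nonneg.2; linarith
        have h8 : a ^ (i + 1) * (1 - a ^ (i + 1))⁻¹ ≤ a * (1 - a)⁻¹ :=
          mul_le_mul hai h3 h7 ha0
        have h9 : (a ^ (i + 1)) ^ 2 * (1 - a ^ (i + 1))⁻¹ =
            a ^ (i + 1) * (a ^ (i + 1) * (1 - a ^ (i + 1))⁻¹) := by ring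
        rw [h9]
        have := mul_le_mul_of_nonneg_left h8 h6
        linarith
      linarith [h4]
  have hmult : Multipliable (fun i : ℕ => 1 - x * x ^ i) := by
    have := Complex.multipliable_of_summable_log hlog
    exact this
  exact hmult.hasProd

lemma tendsto_P (hx : ‖x‖ < 1) : Tendsto (fun n => P x n) atTop (𝓝 (qPochInf x x)) := by
  have h := (hasProd_qPochInf hx).tendsto_prod_nat
  apply h.congr
  intro n
  unfold P
  exact Finset.prod_congr rfl fun i _ => by rw [pow_succ']

lemma qPochInf_ne (hx : ‖x‖ < 1) : qPochInf x x ≠ 0 := by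
  obtain ⟨c, hc, hcle⟩ := P_norm_lower hx
  have h1 : Tendsto (fun n => ‖P x n‖) atTop (𝓝 ‖qPochInf x x‖) := (tendsto_P hx).norm
  have h2 : c ≤ ‖qPochInf x x‖ := ge_of_tendsto h1 (Eventually.of_forall hcle)
  intro h
  rw [h, norm_zero] at h2
  linarith

lemma tendsto_Gb (hx : ‖x‖ < 1) (m : ℕ) :
    Tendsto (fun N => Gb x N m) atTop (𝓝 (P x m)⁻¹) := by
  have hP := tendsto_P hx
  have hPm : Tendsto (fun N => P x (N - m)) atTop (𝓝 (qPochInf x x)) :=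
    hP.comp (tendsto_sub_atTop_nat m)
  have hden : Tendsto (fun N => P x m * P x (N - m)) atTop (𝓝 (P x m * qPochInf x x)) :=
    tendsto_const_nhds.mul hPm
  have hne : P x m * qPochInf x x ≠ 0 := mul_ne_zero (P_ne_zero hx m) (qPochInf_ne hx)
  have h := hP.div hden hne
  have heq : (fun N => Gb x N m) =ᶠ[atTop] fun N => P x N / (P x m * P x (N - m)) := by
    filter_upwards [eventually_ge_atTop m] with N hN
    unfold Gb
    rw [if_pos hN]
  have hval : qPochInf x x / (P x m * qPochInf x x) = (P x m)⁻¹ := by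
    rw [mul_comm, div_mul_eq_div_div, div_self (qPochInf_ne hx), one_div]
  rw [hval] at h
  exact Tendsto.congr' heq.symm h

end Analytic

section Vander
variable {x : ℂ}

lemma vander (hx : ‖x‖ < 1) :
    ∀ (n d k : ℕ), Gb x (k + d + n) k =
      ∑ j ∈ range (k + 1), Gb x (k + d) (k - j) * Gb x n j * x ^ ((d + j) * j) := by
  intro n
  induction n with
  | zero =>
    intro d k
    rw [Finset.sum_eq_single 0]
    · simp [Gb_self hx, Gb_zero hx]
    · intro j _ hj
      have : (0:ℕ) < j := Nat.pos_of_ne_zero hj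
      rw [Gb_eq_zero x this]
      ring
    · intro h
      exact absurd (Finset.mem_range.2 (by omega)) h
  | succ n IH =>
    intro d k
    cases k with
    | zero =>
      rw [show 0 + d + (n + 1) = (d + n) + 1 by omega]
      rw [Gb_zero hx]
      rw [Finset.sum_range_one]
      rw [Gb_zero hx, Gb_zero hx]
      simp
    | succ k' =>
      have e1 := IH d (k' + 1)
      have e2 := IH (d + 1) k'
      rw [show k' + (d + 1) + n = k' + 1 + d + n by omega] at e2
      rw [show k' + (d + 1) = k' + 1 + d by omega] at e2
      rw [show k' + 1 + d + (n + 1) = (k' + 1 + d + n) + 1 by omega]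
      rw [pascA hx (k' + 1 + d + n) k']
      rw [show k' + 1 + d + n - k' = d + n + 1 by omega]
      rw [e1, e2]
      rw [Finset.sum_range_succ' _ (k' + 1)]
      conv_rhs => rw [Finset.sum_range_succ' _ (k' + 1)]
      rw [Finset.mul_sum]
      rw [add_right_comm, ← Finset.sum_add_distrib]
      congr 1
      swap
      · rw [Gb_zero hx, Gb_zero hx]
      apply Finset.sum_congr rfl
      intro j _
      rw [show k' + 1 - (j + 1) = k' - j by omega]
      rw [pascA hx n j]
      by_cases hjn : j ≤ n
      · have hexp : x ^ (d + n + 1) * x ^ ((d + 1 + j) * j) = x ^ (n - j) * x ^ ((d + (j+1)) * (j+1)) := by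
          rw [← pow_add, ← pow_add]
          congr 1
          zify [hjn]
          ring
        linear_combination (Gb x (k' + 1 + d) (k' - j) * Gb x n j) * hexp
      · rw [Gb_eq_zero x (show n < j by omega)]
        rw [Gb_eq_zero x (show n < j + 1 by omega)]
        ring
end Vander

/-- `(k - n)^2` as a natural number. -/
def esq (n k : ℕ) : ℕ := (k - n) ^ 2 + (n - k) ^ 2

lemma esq_cast (n k : ℕ) : (esq n k : ℤ) = ((k : ℤ) - n) ^ 2 := by
  unfold esq
  rcases le_total n k with h | h
  · rw [Nat.sub_eq_zero_of_le h]
    push_cast [h]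
    ring
  · rw [Nat.sub_eq_zero_of_le h]
    push_cast [h]
    ring

section JTP
variable {q : ℂ}

lemma jtp (hq : ‖q‖ < 1) (hx : ‖q ^ 2‖ < 1) (z : ℂ) (n : ℕ) :
    ∏ j ∈ range n, ((1 + z * q ^ (2 * j + 1)) * (z + q ^ (2 * j + 1))) =
      ∑ k ∈ range (2 * n + 1), z ^ k * q ^ (esq n k) * Gb (q ^ 2) (2 * n) k := by
  induction n with
  | zero =>
    simp [esq, Gb_zero hx]
  | succ n IH =>
    set x := q ^ 2 with hxdef
    set w := q ^ (2 * n + 1) with hwdef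
    set A : ℕ → ℂ := fun k => z ^ k * q ^ (esq n k) * Gb x (2 * n) k with hA
    set B : ℕ → ℂ := fun k => z ^ k * q ^ (esq (n + 1) k) * Gb x (2 * n + 2) k with hB
    have hA_zero : ∀ k, 2 * n < k → A k = 0 := by
      intro k hk
      simp only [hA, Gb_eq_zero x hk, mul_zero]
    -- pointwise claims
    have claim0 : B 0 = w * A 0 := by
      simp only [hA, hB, pow_zero, one_mul, Gb_zero hx]
      rw [mul_one, mul_one, ← pow_add]
      congr 1
      zify
      rw [esq_cast, esq_cast]
      push_cast
      ring
    have claim1 : B 1 = w * A 1 + (1 + w ^ 2) * (z * A 0) := by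
      have hG1 : Gb x (2 * n + 2) 1 = x * Gb x (2 * n) 1 + (x ^ (2 * n + 1) + 1) := by
        rw [show 2 * n + 2 = (2 * n + 1) + 1 by omega]
        rw [show (1 : ℕ) = 0 + 1 by omega, pascB hx (2 * n + 1) 0]
        rw [pascA hx (2 * n) 0]
        rw [Gb_zero hx, Gb_zero hx]
        simp only [Nat.sub_zero]
        ring
      simp only [hA, hB, pow_one, Gb_zero hx]
      rw [hG1]
      have c1 : q ^ (esq (n + 1) 1) * x = q ^ (2 * n + 1) * q ^ (esq n 1) := by
        rw [hxdef, ← pow_add, ← pow_add]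
        congr 1
        zify
        rw [esq_cast, esq_cast]
        push_cast
        ring
      have c2 : q ^ (esq (n + 1) 1) * x ^ (2 * n + 1) = q ^ (2 * n + 1) * q ^ (2 * n + 1) * q ^ (esq n 0) := by
        rw [hxdef, ← pow_mul, ← pow_add, ← pow_add, ← pow_add]
        congr 1
        zify
        rw [esq_cast, esq_cast]
        push_cast
        ring
      have c3 : q ^ (esq (n + 1) 1) = q ^ (esq n 0) := by
        congr 1
        zify
        rw [esq_cast, esq_cast]
        push_cast
        ring
      rw [hwdef]
      linear_combination (z * Gb x (2 * n) 1) * c1 + z * c2 + z * c3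
    have claim2 : ∀ m : ℕ, B (m + 2) =
        w * A (m + 2) + (1 + w ^ 2) * (z * A (m + 1)) + w * (z ^ 2 * A m) := by
      intro m
      have hG : Gb x (2 * n + 2) (m + 2) =
          x ^ (m + 2) * Gb x (2 * n) (m + 2) +
          (x ^ (m + 2) * x ^ (2 * n - (m + 1)) + 1) * Gb x (2 * n) (m + 1) +
          x ^ (2 * n - m) * Gb x (2 * n) m := by
        rw [show 2 * n + 2 = (2 * n + 1) + 1 by omega]
        rw [show m + 2 = (m + 1) + 1 by omega, pascB hx (2 * n + 1) (m + 1)]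
        rw [pascA hx (2 * n) (m + 1)]
        rw [show m + 1 + 1 = m + 2 by omega]
        rw [pascA hx (2 * n) m]
        ring
      have t1 : z ^ (m + 2) * q ^ (esq (n + 1) (m + 2)) * (x ^ (m + 2) * Gb x (2 * n) (m + 2))
          = w * A (m + 2) := by
        simp only [hA]
        rw [hwdef, hxdef, ← pow_mul]
        have c : q ^ (esq (n + 1) (m + 2)) * q ^ (2 * (m + 2)) =
            q ^ (2 * n + 1) * q ^ (esq n (m + 2)) := by
          rw [← pow_add, ← pow_add]
          congr 1
          zify
          rw [esq_cast, esq_cast]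
          push_cast
          ring
        linear_combination (z ^ (m + 2) * Gb x (2 * n) (m + 2)) * c
      have t2 : z ^ (m + 2) * q ^ (esq (n + 1) (m + 2)) *
            ((x ^ (m + 2) * x ^ (2 * n - (m + 1)) + 1) * Gb x (2 * n) (m + 1))
          = (1 + w ^ 2) * (z * A (m + 1)) := by
        by_cases hm : m + 1 ≤ 2 * n
        · simp only [hA]
          rw [hwdef, hxdef, ← pow_mul, ← pow_mul]
          have c : q ^ (esq (n + 1) (m + 2)) * (q ^ (2 * (m + 2)) * q ^ (2 * (2 * n - (m + 1))) + 1) =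
              (1 + (q ^ (2 * n + 1)) ^ 2) * q ^ (esq n (m + 1)) := by
            rw [← pow_mul, ← pow_add]
            have he : 2 * (m + 2) + 2 * (2 * n - (m + 1)) = (2 * n + 1) * 2 := by omega
            rw [he]
            have he2 : esq (n + 1) (m + 2) = esq n (m + 1) := by
              zify; rw [esq_cast, esq_cast]; push_cast; ring
            rw [he2]
            ring
          linear_combination (z ^ (m + 2) * Gb x (2 * n) (m + 1)) * c
        · rw [Gb_eq_zero x (show 2 * n < m + 1 by omega)]
          simp only [hA, Gb_eq_zero x (show 2 * n < m + 1 by omega)]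
          ring
      have t3 : z ^ (m + 2) * q ^ (esq (n + 1) (m + 2)) * (x ^ (2 * n - m) * Gb x (2 * n) m)
          = w * (z ^ 2 * A m) := by
        by_cases hm : m ≤ 2 * n
        · simp only [hA]
          rw [hwdef, hxdef, ← pow_mul]
          have c : q ^ (esq (n + 1) (m + 2)) * q ^ (2 * (2 * n - m)) =
              q ^ (2 * n + 1) * q ^ (esq n m) := by
            rw [← pow_add, ← pow_add]
            congr 1
            zify [hm]
            rw [esq_cast, esq_cast]
            push_cast
            ring
          linear_combination (z ^ (m + 2) * Gb x (2 * n) m) * c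
        · rw [Gb_eq_zero x (show 2 * n < m by omega)]
          simp only [hA, Gb_eq_zero x (show 2 * n < m by omega)]
          ring
      simp only [hB]
      rw [hG]
      linear_combination t1 + t2 + t3
    -- now assemble
    rw [Finset.prod_range_succ, IH]
    have hre : (2 * (n + 1) + 1) = (2 * n + 1 + 1) + 1 := by omega
    rw [hre]
    have hSB : ∑ k ∈ range (2 * n + 1 + 1 + 1), B k =
        (∑ m ∈ range (2 * n + 1), B (m + 2)) + B 1 + B 0 := by
      rw [Finset.sum_range_succ' B (2 * n + 1 + 1)]
      rw [Finset.sum_range_succ' (fun k => B (k + 1)) (2 * n + 1)]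
    have goalrhs : ∑ k ∈ range (2 * n + 1 + 1 + 1),
        z ^ k * q ^ (esq (n + 1) k) * Gb x (2 * (n + 1)) k = ∑ k ∈ range (2 * n + 1 + 1 + 1), B k := by
      apply Finset.sum_congr rfl
      intro k _
      simp only [hB]
      rw [show 2 * (n + 1) = 2 * n + 2 by omega]
    rw [goalrhs, hSB]
    have e2 : (∑ m ∈ range (2 * n + 1), A (m + 1)) + A 0 = ∑ k ∈ range (2 * n + 1), A k := by
      rw [← Finset.sum_range_succ' A (2 * n + 1)]
      rw [Finset.sum_range_succ]
      rw [hA_zero (2 * n + 1) (by omega)]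
      rw [add_zero]
    have e1 : (∑ m ∈ range (2 * n + 1), A (m + 2)) + A 1 + A 0 = ∑ k ∈ range (2 * n + 1), A k := by
      have s1 : (∑ m ∈ range (2 * n + 1), A (m + 2)) + A 1 = ∑ m ∈ range (2 * n + 1 + 1), A (m + 1) := by
        rw [Finset.sum_range_succ' (fun k => A (k + 1)) (2 * n + 1)]
      rw [s1]
      have s2 : ∑ m ∈ range (2 * n + 1 + 1), A (m + 1) = ∑ m ∈ range (2 * n + 1), A (m + 1) := by
        rw [Finset.sum_range_succ]
        rw [hA_zero (2 * n + 1 + 1) (by omega)]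
        rw [add_zero]
      rw [s2]
      exact e2
    calc (∑ k ∈ range (2 * n + 1), A k) * ((1 + z * q ^ (2 * n + 1)) * (z + q ^ (2 * n + 1)))
        = (∑ k ∈ range (2 * n + 1), A k) * ((1 + z * w) * (z + w)) := rfl
      _ = (∑ m ∈ range (2 * n + 1), B (m + 2)) + B 1 + B 0 := by
          have hsplit : ∑ m ∈ range (2 * n + 1),
              (w * A (m + 2) + (1 + w ^ 2) * (z * A (m + 1)) + w * (z ^ 2 * A m)) =
              w * (∑ m ∈ range (2 * n + 1), A (m + 2)) +
              (1 + w ^ 2) * z * (∑ m ∈ range (2 * n + 1), A (m + 1)) +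
              w * z ^ 2 * (∑ m ∈ range (2 * n + 1), A m) := by
            simp only [Finset.sum_add_distrib, Finset.mul_sum, mul_assoc]
          rw [Finset.sum_congr rfl (fun m _ => claim2 m), hsplit, claim1, claim0]
          linear_combination (-w) * e1 - ((1 + w ^ 2) * z) * e2
end JTP

noncomputable def zphi : ℂ := ((3 + Real.sqrt 5) / 2 : ℝ)
noncomputable def zpsi : ℂ := ((3 - Real.sqrt 5) / 2 : ℝ)
noncomputable def Lc (j : ℕ) : ℂ := zphi ^ j + zpsi ^ j

lemma zsum : zphi + zpsi = 3 := by
  unfold zphi zpsi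
  push_cast
  ring

lemma zmul : zphi * zpsi = 1 := by
  unfold zphi zpsi
  have h5 : Real.sqrt 5 ^ 2 = 5 := Real.sq_sqrt (by norm_num)
  have h : ((3 + Real.sqrt 5) / 2) * ((3 - Real.sqrt 5) / 2) = 1 := by nlinarith
  rw [← Complex.ofReal_mul, h]
  norm_num

lemma zphi2 : zphi ^ 2 = 3 * zphi - 1 := by linear_combination zphi * zsum - zmul

lemma zpsi2 : zpsi ^ 2 = 3 * zpsi - 1 := by linear_combination zpsi * zsum - zmul

lemma zmuln (m : ℕ) : zphi ^ m * zpsi ^ m = 1 := by rw [← mul_pow, zmul, one_pow]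

lemma Lc_rec (j : ℕ) : Lc (j + 2) = 3 * Lc (j + 1) - Lc j := by
  unfold Lc
  have h1 : zphi ^ (j + 2) = zphi ^ j * zphi ^ 2 := by rw [← pow_add]
  have h2 : zpsi ^ (j + 2) = zpsi ^ j * zpsi ^ 2 := by rw [← pow_add]
  have h3 : zphi ^ (j + 1) = zphi ^ j * zphi := by rw [pow_succ]
  have h4 : zpsi ^ (j + 1) = zpsi ^ j * zpsi := by rw [pow_succ]
  rw [h1, h2, h3, h4, zphi2, zpsi2]
  ring

lemma fib_step (j : ℕ) :
    Nat.fib (2 * j + 7) + Nat.fib (2 * j + 5) + (Nat.fib (2 * j + 3) + Nat.fib (2 * j + 1)) =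
      3 * (Nat.fib (2 * j + 5) + Nat.fib (2 * j + 3)) := by
  have h7 : Nat.fib (2 * j + 7) = Nat.fib (2 * j + 5) + Nat.fib (2 * j + 6) := by
    rw [show 2 * j + 7 = (2 * j + 5) + 2 by ring]; exact Nat.fib_add_two
  have h6 : Nat.fib (2 * j + 6) = Nat.fib (2 * j + 4) + Nat.fib (2 * j + 5) := by
    rw [show 2 * j + 6 = (2 * j + 4) + 2 by ring]; exact Nat.fib_add_two
  have h5 : Nat.fib (2 * j + 5) = Nat.fib (2 * j + 3) + Nat.fib (2 * j + 4) := by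
    rw [show 2 * j + 5 = (2 * j + 3) + 2 by ring]; exact Nat.fib_add_two
  have h4 : Nat.fib (2 * j + 4) = Nat.fib (2 * j + 2) + Nat.fib (2 * j + 3) := by
    rw [show 2 * j + 4 = (2 * j + 2) + 2 by ring]; exact Nat.fib_add_two
  have h3 : Nat.fib (2 * j + 3) = Nat.fib (2 * j + 1) + Nat.fib (2 * j + 2) := by
    rw [show 2 * j + 3 = (2 * j + 1) + 2 by ring]; exact Nat.fib_add_two
  omega

lemma Lc_fib : ∀ j : ℕ, Lc (j + 1) = (Nat.fib (2 * j + 3) : ℂ) + (Nat.fib (2 * j + 1) : ℂ) := by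
  intro j
  induction j using Nat.twoStepInduction with
  | zero =>
    unfold Lc
    rw [pow_one, pow_one, zsum]
    norm_num [Nat.fib]
  | one =>
    unfold Lc
    rw [zphi2, zpsi2]
    have : 3 * zphi - 1 + (3 * zpsi - 1) = 3 * (zphi + zpsi) - 2 := by ring
    rw [this, zsum]
    norm_num [show (2:ℕ)*1+3 = 5 by norm_num, show (2:ℕ)*1+1 = 3 by norm_num, Nat.fib]
  | more j ih1 ih2 =>
    have hrec : Lc (j + 2 + 1) = 3 * Lc (j + 1 + 1) - Lc (j + 1) := by
      rw [show j + 2 + 1 = (j + 1) + 2 by ring]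
      rw [show j + 1 + 1 = (j + 1) + 1 by ring]
      exact Lc_rec (j + 1)
    rw [hrec, ih1, ih2]
    have hfib := fib_step j
    have e1 : 2 * (j + 2) + 3 = 2 * j + 7 := by ring
    have e2 : 2 * (j + 2) + 1 = 2 * j + 5 := by ring
    have e3 : 2 * (j + 1) + 3 = 2 * j + 5 := by ring
    have e4 : 2 * (j + 1) + 1 = 2 * j + 3 := by ring
    rw [e1, e2, e3, e4]
    have : (Nat.fib (2 * j + 7) : ℂ) + Nat.fib (2 * j + 5) + (Nat.fib (2 * j + 3) + Nat.fib (2 * j + 1)) =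
        3 * ((Nat.fib (2 * j + 5) : ℂ) + Nat.fib (2 * j + 3)) := by
      exact_mod_cast congrArg (Nat.cast : ℕ → ℂ) hfib
    linear_combination -this

section ProdFib
variable {q : ℂ}

lemma prod_pair (hq : ‖q‖ < 1) (hx : ‖q ^ 2‖ < 1) (n : ℕ) :
    ∏ j ∈ range n, (1 + 3 * q ^ (2 * j + 1) + q ^ (4 * j + 2)) =
      Gb (q ^ 2) (2 * n) n +
        ∑ j ∈ range n, Lc (j + 1) * q ^ ((j + 1) ^ 2) * Gb (q ^ 2) (2 * n) (n + 1 + j) := by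
  set x := q ^ 2
  set Pr := ∏ j ∈ range n, (1 + 3 * q ^ (2 * j + 1) + q ^ (4 * j + 2)) with hPr
  -- convert the jtp products
  have hfac : ∀ (z : ℂ), z ^ 2 = 3 * z - 1 → ∀ j : ℕ,
      (1 + z * q ^ (2 * j + 1)) * (z + q ^ (2 * j + 1)) =
        z * (1 + 3 * q ^ (2 * j + 1) + q ^ (4 * j + 2)) := by
    intro z hz j
    have hpow : (q ^ (2 * j + 1)) ^ 2 = q ^ (4 * j + 2) := by
      rw [← pow_mul]; congr 1; ring
    linear_combination q ^ (2 * j + 1) * hz + z * hpow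
  have hprodz : ∀ (z : ℂ), z ^ 2 = 3 * z - 1 →
      ∏ j ∈ range n, ((1 + z * q ^ (2 * j + 1)) * (z + q ^ (2 * j + 1))) = z ^ n * Pr := by
    intro z hz
    rw [Finset.prod_congr rfl (fun j _ => hfac z hz j), Finset.prod_mul_distrib,
      Finset.prod_const, Finset.card_range, hPr]
  have eφ : zphi ^ n * Pr = ∑ k ∈ range (2 * n + 1), zphi ^ k * q ^ (esq n k) * Gb x (2 * n) k :=
    (hprodz zphi zphi2).symm.trans (jtp hq hx zphi n)
  have eψ : zpsi ^ n * Pr = ∑ k ∈ range (2 * n + 1), zpsi ^ k * q ^ (esq n k) * Gb x (2 * n) k :=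
    (hprodz zpsi zpsi2).symm.trans (jtp hq hx zpsi n)
  set f : ℕ → ℂ :=
    fun k => (zphi ^ k * zpsi ^ n + zpsi ^ k * zphi ^ n) * q ^ (esq n k) * Gb x (2 * n) k with hf
  have hcomb : 2 * Pr = ∑ k ∈ range (2 * n + 1), f k := by
    have h2 : 2 * Pr = zpsi ^ n * (zphi ^ n * Pr) + zphi ^ n * (zpsi ^ n * Pr) := by
      linear_combination (-2 * Pr) * zmuln n
    rw [h2, eφ, eψ, Finset.mul_sum, Finset.mul_sum, ← Finset.sum_add_distrib]
    exact Finset.sum_congr rfl (fun k _ => by simp only [hf]; ring)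
  -- auxiliary power identities
  have zaux1 : ∀ (m r : ℕ), zphi ^ m * zpsi ^ (m + r) = zpsi ^ r := by
    intro m r
    rw [pow_add]
    linear_combination zpsi ^ r * zmuln m
  have zaux2 : ∀ (m r : ℕ), zpsi ^ m * zphi ^ (m + r) = zphi ^ r := by
    intro m r
    rw [pow_add]
    linear_combination zphi ^ r * zmuln m
  -- split and reflect the sum
  have hsplit : ∑ k ∈ range (2 * n + 1), f k =
      (∑ k ∈ range n, f k) + ∑ k ∈ range (n + 1), f (n + k) := by
    rw [show 2 * n + 1 = n + (n + 1) by omega, Finset.sum_range_add]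
  have hrefl : ∑ k ∈ range n, f k = ∑ j ∈ range n, f (n - 1 - j) :=
    (Finset.sum_range_reflect f n).symm
  have hpeel : ∑ k ∈ range (n + 1), f (n + k) =
      (∑ k ∈ range n, f (n + (k + 1))) + f (n + 0) :=
    Finset.sum_range_succ' (fun k => f (n + k)) n
  have hfn : f (n + 0) = 2 * Gb x (2 * n) n := by
    simp only [hf, Nat.add_zero]
    have he : esq n n = 0 := by unfold esq; simp
    rw [he, pow_zero]
    linear_combination (2 * Gb x (2 * n) n) * zmuln n
  have hpair : ∀ j ∈ range n, f (n - 1 - j) + f (n + (j + 1)) =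
      2 * (Lc (j + 1) * q ^ ((j + 1) ^ 2) * Gb x (2 * n) (n + 1 + j)) := by
    intro j hj
    have hjn : j < n := Finset.mem_range.1 hj
    have hidx : n - 1 - j = n - (j + 1) := by omega
    have he1 : esq n (n - (j + 1)) = (j + 1) ^ 2 := by
      unfold esq
      rw [Nat.sub_eq_zero_of_le (by omega), show n - (n - (j + 1)) = j + 1 by omega]
      simp
    have he2 : esq n (n + (j + 1)) = (j + 1) ^ 2 := by
      unfold esq
      rw [show n + (j + 1) - n = j + 1 by omega, Nat.sub_eq_zero_of_le (by omega)]
      simp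
    have hG : Gb x (2 * n) (n - (j + 1)) = Gb x (2 * n) (n + 1 + j) := by
      rw [show n - (j + 1) = 2 * n - (n + 1 + j) by omega]
      exact Gb_symm (by omega)
    have hc1 : zphi ^ (n - (j + 1)) * zpsi ^ n + zpsi ^ (n - (j + 1)) * zphi ^ n = Lc (j + 1) := by
      have k1 := zaux1 (n - (j + 1)) (j + 1)
      have k2 := zaux2 (n - (j + 1)) (j + 1)
      rw [show n - (j + 1) + (j + 1) = n by omega] at k1 k2
      unfold Lc
      linear_combination k1 + k2
    have hc2 : zphi ^ (n + (j + 1)) * zpsi ^ n + zpsi ^ (n + (j + 1)) * zphi ^ n = Lc (j + 1) := by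
      unfold Lc
      rw [pow_add, pow_add]
      linear_combination (zphi ^ (j + 1) + zpsi ^ (j + 1)) * zmuln n
    simp only [hf, hidx]
    rw [he1, he2, hG, hc1, hc2, show n + (j + 1) = n + 1 + j by omega]
    ring
  have hfinal : 2 * Pr = 2 * (Gb x (2 * n) n +
      ∑ j ∈ range n, Lc (j + 1) * q ^ ((j + 1) ^ 2) * Gb x (2 * n) (n + 1 + j)) := by
    rw [hcomb, hsplit, hrefl, hpeel, hfn]
    rw [← add_assoc, ← Finset.sum_add_distrib]
    rw [Finset.sum_congr rfl hpair]
    rw [← Finset.mul_sum]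
    ring
  exact mul_left_cancel₀ two_ne_zero hfinal
end ProdFib

section Durfee
variable {x : ℂ}

lemma Gb_norm_le (hx : ‖x‖ < 1) :
    ∃ C > 0, ∀ n k : ℕ, ‖Gb x n k‖ ≤ C := by
  obtain ⟨c, hc, hcle⟩ := P_norm_lower hx
  have hE : (0:ℝ) < Real.exp ((1 - ‖x‖)⁻¹) := Real.exp_pos _
  refine ⟨Real.exp ((1 - ‖x‖)⁻¹) / (c * c), by positivity, fun n k => ?_⟩
  unfold Gb
  split_ifs with h
  · rw [norm_div, norm_mul]
    exact div_le_div₀ hE.le (P_norm_upper hx n) (by positivity)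
      (mul_le_mul (hcle k) (hcle (n - k)) hc.le (norm_nonneg _))
  · rw [norm_zero]; positivity

lemma durfee_finite (hx : ‖x‖ < 1) (N r : ℕ) :
    Gb x (2 * N + r) N = ∑ j ∈ range (N + 1), Gb x (N + r) (r + j) * Gb x N j * x ^ ((r + j) * j) := by
  have h := vander hx N r N
  rw [show N + r + N = 2 * N + r by omega] at h
  rw [h]
  apply Finset.sum_congr rfl
  intro j hj
  have hjN : j ≤ N := by have := Finset.mem_range.1 hj; omega
  congr 1
  · congr 1
    rw [show N - j = (N + r) - (r + j) by omega]
    exact Gb_symm (by omega)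

lemma tendsto_Gb_durfee (hx : ‖x‖ < 1) (r : ℕ) :
    Tendsto (fun N => Gb x (2 * N + r) N) atTop (𝓝 (qPochInf x x)⁻¹) := by
  have hfun : (fun N => Gb x (2 * N + r) N) =
      fun N => P x (2 * N + r) / (P x N * P x (N + r)) := by
    funext N
    unfold Gb
    rw [if_pos (by omega), show 2 * N + r - N = N + r by omega]
  rw [hfun]
  have h2N : Tendsto (fun N : ℕ => 2 * N + r) atTop atTop :=
    tendsto_atTop_mono (fun N => by simp only [id_eq]; omega) tendsto_id
  have hNr : Tendsto (fun N : ℕ => N + r) atTop atTop :=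
    tendsto_atTop_mono (fun N => by simp only [id_eq]; omega) tendsto_id
  have h1 : Tendsto (fun N => P x (2 * N + r)) atTop (𝓝 (qPochInf x x)) :=
    (tendsto_P hx).comp h2N
  have h2 : Tendsto (fun N => P x N * P x (N + r)) atTop
      (𝓝 (qPochInf x x * qPochInf x x)) :=
    (tendsto_P hx).mul ((tendsto_P hx).comp hNr)
  have hne : qPochInf x x * qPochInf x x ≠ 0 :=
    mul_ne_zero (qPochInf_ne hx) (qPochInf_ne hx)
  have := h1.div h2 hne
  have hval : qPochInf x x / (qPochInf x x * qPochInf x x) = (qPochInf x x)⁻¹ := by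
    rw [div_mul_eq_div_div, div_self (qPochInf_ne hx), one_div]
  rwa [hval] at this

lemma durfee (hx : ‖x‖ < 1) (r : ℕ) :
    ∑' m : ℕ, x ^ ((r + m) * m) * ((P x m)⁻¹ * (P x (r + m))⁻¹) = (qPochInf x x)⁻¹ := by
  obtain ⟨C, hC, hCle⟩ := Gb_norm_le hx
  set F : ℕ → ℕ → ℂ := fun N m => Gb x (N + r) (r + m) * Gb x N m * x ^ ((r + m) * m) with hF
  set G : ℕ → ℂ := fun m => x ^ ((r + m) * m) * ((P x m)⁻¹ * (P x (r + m))⁻¹) with hG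
  -- each tsum over m of F N is the finite Durfee sum
  have htsumF : ∀ N, ∑' m, F N m = Gb x (2 * N + r) N := by
    intro N
    rw [durfee_finite hx N r]
    apply tsum_eq_sum
    intro m hm
    have : N < m := by
      by_contra h
      exact hm (Finset.mem_range.2 (by omega))
    simp only [hF, Gb_eq_zero x this, mul_zero, zero_mul]
  -- Tannery
  have hbound : Summable (fun m : ℕ => C * C * ‖x‖ ^ m) :=
    (summable_geometric_of_lt_one (norm_nonneg x) hx).mul_left _
  have htann : Tendsto (fun N => ∑' m, F N m) atTop (𝓝 (∑' m, G m)) := by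
    apply tendsto_tsum_of_dominated_convergence hbound
    · intro m
      have hg1 : Tendsto (fun N => Gb x (N + r) (r + m)) atTop (𝓝 (P x (r + m))⁻¹) :=
        (tendsto_Gb hx (r + m)).comp (tendsto_atTop_mono (fun N => by simp only [id_eq]; omega) tendsto_id)
      have hg2 : Tendsto (fun N => Gb x N m) atTop (𝓝 (P x m)⁻¹) := tendsto_Gb hx m
      have := (hg1.mul hg2).mul_const (x ^ ((r + m) * m))
      simp only [hF, hG]
      convert this using 2
      ring
    · filter_upwards with N
      intro m
      simp only [hF]
      rw [norm_mul, norm_mul, norm_pow]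
      have h1 : ‖x‖ ^ ((r + m) * m) ≤ ‖x‖ ^ m := by
        apply pow_le_pow_of_le_one (norm_nonneg x) hx.le
        rcases Nat.eq_zero_or_pos m with h0 | h0
        · simp [h0]
        · calc m = 1 * m := (one_mul m).symm
            _ ≤ (r + m) * m := Nat.mul_le_mul_right m (by omega)
      exact mul_le_mul (mul_le_mul (hCle _ _) (hCle _ _) (norm_nonneg _) hC.le) h1
        (by positivity) (by positivity)
  have h2 : Tendsto (fun N => ∑' m, F N m) atTop (𝓝 (qPochInf x x)⁻¹) := by
    rw [show (fun N => ∑' m, F N m) = fun N => Gb x (2 * N + r) N from funext htsumF]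
    exact tendsto_Gb_durfee hx r
  exact tendsto_nhds_unique htann h2
end Durfee

/-- the coefficients -/
noncomputable def ccoef : ℕ → ℂ := fun k => if k = 0 then 1 else Lc k

lemma fib_le_two_pow : ∀ n : ℕ, Nat.fib n ≤ 2 ^ n := by
  intro n
  induction n using Nat.twoStepInduction with
  | zero => simp
  | one => simp
  | more n ih1 ih2 =>
    rw [Nat.fib_add_two]
    have h1 : (2:ℕ) ^ (n + 1) = 2 * 2 ^ n := by ring
    have h2 : (2:ℕ) ^ (n + 2) = 4 * 2 ^ n := by ring
    omega

lemma ccoef_norm (k : ℕ) : ‖ccoef k‖ ≤ 16 * 4 ^ k := by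
  unfold ccoef
  cases k with
  | zero => simp
  | succ j =>
    rw [if_neg (by omega), Lc_fib j]
    have hb : Nat.fib (2 * j + 3) + Nat.fib (2 * j + 1) ≤ 16 * 4 ^ (j + 1) := by
      have f1 := fib_le_two_pow (2 * j + 3)
      have f2 := fib_le_two_pow (2 * j + 1)
      have h1 : (2:ℕ) ^ (2 * j + 3) = 8 * 4 ^ j := by
        rw [pow_add, pow_mul]; ring
      have h2 : (2:ℕ) ^ (2 * j + 1) = 2 * 4 ^ j := by
        rw [pow_add, pow_mul]; ring
      have h3 : (4:ℕ) ^ (j + 1) = 4 * 4 ^ j := by ring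
      omega
    calc ‖(Nat.fib (2 * j + 3) : ℂ) + (Nat.fib (2 * j + 1) : ℂ)‖
        ≤ ‖(Nat.fib (2 * j + 3) : ℂ)‖ + ‖(Nat.fib (2 * j + 1) : ℂ)‖ := norm_add_le _ _
      _ = (Nat.fib (2 * j + 3) : ℝ) + (Nat.fib (2 * j + 1) : ℝ) := by
          rw [Complex.norm_natCast, Complex.norm_natCast]
      _ ≤ ((16 * 4 ^ (j + 1) : ℕ) : ℝ) := by exact_mod_cast hb
      _ = 16 * 4 ^ (j + 1) := by push_cast; ring

section Main
variable {q : ℂ}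

lemma summable_u {a : ℝ} (ha0 : 0 ≤ a) (ha : a < 1) :
    Summable (fun k : ℕ => (16:ℝ) * 4 ^ k * a ^ (3 * k ^ 2)) := by
  apply summable_of_ratio_norm_eventually_le (r := 1/2) (by norm_num)
  have htend : Tendsto (fun k : ℕ => 8 * a ^ (6 * k + 3)) atTop (𝓝 0) := by
    have h1 : Tendsto (fun k : ℕ => 6 * k + 3) atTop atTop :=
      tendsto_atTop_mono (fun k => by simp only [id_eq]; omega) tendsto_id
    have h2 := (tendsto_pow_atTop_nhds_zero_of_lt_one ha0 ha).comp h1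
    simpa using h2.const_mul (8:ℝ)
  filter_upwards [htend.eventually_le_const (show (0:ℝ) < 1/2 by norm_num)] with k hk
  have hnn1 : (0:ℝ) ≤ 16 * 4 ^ (k+1) * a ^ (3 * (k+1) ^ 2) := by positivity
  have hnn2 : (0:ℝ) ≤ 16 * 4 ^ k * a ^ (3 * k ^ 2) := by positivity
  rw [Real.norm_of_nonneg hnn1, Real.norm_of_nonneg hnn2]
  have hsplit : a ^ (3 * (k + 1) ^ 2) = a ^ (3 * k ^ 2) * a ^ (6 * k + 3) := by
    rw [← pow_add]; congr 1; ring
  rw [hsplit]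
  have hkey := mul_le_mul_of_nonneg_left hk
    (show (0:ℝ) ≤ 4 ^ k * a ^ (3 * k ^ 2) by positivity)
  have h4 : (4:ℝ) ^ (k + 1) = 4 * 4 ^ k := by ring
  rw [h4]
  nlinarith [hkey, mul_nonneg (pow_nonneg (show (0:ℝ) ≤ 4 by norm_num) k)
    (pow_nonneg ha0 (3 * k ^ 2))]

lemma summable_v {a : ℝ} (ha0 : 0 ≤ a) (ha : a < 1) :
    Summable (fun m : ℕ => a ^ (2 * m ^ 2)) := by
  apply Summable.of_nonneg_of_le (fun m => by positivity)
    (fun m => pow_le_pow_of_le_one ha0 ha.le ?_) (summable_geometric_of_lt_one ha0 ha)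
  rcases Nat.eq_zero_or_pos m with h0 | h0
  · simp [h0]
  · calc m = 1 * m := (one_mul m).symm
      _ ≤ (2 * m) * m := Nat.mul_le_mul_right m (by omega)
      _ = 2 * m ^ 2 := by ring

set_option maxHeartbeats 1000000 in
theorem main (hq : ‖q‖ < 1) :
    (∑' n : ℕ, q ^ (2 * n ^ 2) *
        (∏ j ∈ Finset.range n, (1 + 3 * q ^ (2 * j + 1) + q ^ (4 * j + 2))) /
        qPoch (q ^ 2) (q ^ 2) (2 * n)) =
      (1 / qPochInf (q ^ 2) (q ^ 2)) *
        (1 + ∑' n : ℕ, q ^ (3 * (n + 1) ^ 2) *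
          ((Nat.fib (2 * (n + 1) + 1) : ℂ) + (Nat.fib (2 * (n + 1) - 1) : ℂ))) := by
  have hx : ‖q ^ 2‖ < 1 := by
    rw [norm_pow]
    calc ‖q‖ ^ 2 ≤ ‖q‖ ^ 1 := pow_le_pow_of_le_one (norm_nonneg q) hq.le (by omega)
      _ = ‖q‖ := pow_one _
      _ < 1 := hq
  set x := q ^ 2 with hxdef
  set a : ℝ := ‖q‖ with hadef
  have ha0 : 0 ≤ a := norm_nonneg q
  obtain ⟨c, hc, hcle⟩ := P_norm_lower hx
  have hPinv : ∀ n, ‖(P x n)⁻¹‖ ≤ c⁻¹ := by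
    intro n
    rw [norm_inv]
    exact inv_anti₀ hc (hcle n)
  -- the double-indexed summand
  set g : ℕ × ℕ → ℂ := fun p =>
    ccoef p.1 * q ^ (p.1 ^ 2 + 2 * (p.1 + p.2) ^ 2) *
      ((P x p.2)⁻¹ * (P x (2 * p.1 + p.2))⁻¹) with hg
  -- summability of g
  have hgbound : ∀ p : ℕ × ℕ,
      ‖g p‖ ≤ (16 * 4 ^ p.1 * a ^ (3 * p.1 ^ 2)) * (c⁻¹ * c⁻¹ * a ^ (2 * p.2 ^ 2)) := by
    rintro ⟨k, m⟩
    simp only [hg]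
    rw [norm_mul, norm_mul, norm_mul, norm_pow]
    have h1 : ‖q‖ ^ (k ^ 2 + 2 * (k + m) ^ 2) ≤ a ^ (3 * k ^ 2 + 2 * m ^ 2) := by
      apply pow_le_pow_of_le_one ha0 hq.le
      zify
      nlinarith [mul_nonneg (Int.natCast_nonneg k) (Int.natCast_nonneg m)]
    have h2 : a ^ (3 * k ^ 2 + 2 * m ^ 2) = a ^ (3 * k ^ 2) * a ^ (2 * m ^ 2) := pow_add _ _ _
    have hcc := ccoef_norm k
    have hp1 := hPinv m
    have hp2 := hPinv (2 * k + m)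
    have hnn : (0:ℝ) ≤ a ^ (3 * k ^ 2) * a ^ (2 * m ^ 2) := by positivity
    calc ‖ccoef k‖ * ‖q‖ ^ (k ^ 2 + 2 * (k + m) ^ 2) * (‖(P x m)⁻¹‖ * ‖(P x (2 * k + m))⁻¹‖)
        ≤ (16 * 4 ^ k) * (a ^ (3 * k ^ 2) * a ^ (2 * m ^ 2)) * (c⁻¹ * c⁻¹) := by
          apply mul_le_mul
          · apply mul_le_mul hcc (h2 ▸ h1) (by positivity) (by positivity)
          · exact mul_le_mul hp1 hp2 (norm_nonneg _) (by positivity)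
          · positivity
          · positivity
      _ = (16 * 4 ^ k * a ^ (3 * k ^ 2)) * (c⁻¹ * c⁻¹ * a ^ (2 * m ^ 2)) := by ring
  have hgsum : Summable g := by
    apply Summable.of_norm_bounded ?_ hgbound
    exact (summable_u ha0 hq).mul_of_nonneg
      ((summable_v ha0 hq).mul_left (c⁻¹ * c⁻¹))
      (fun k => by positivity) (fun m => by positivity)
  -- Step A: each term of the series equals an antidiagonal sum of g
  have hGdiv : ∀ {N k : ℕ}, k ≤ N → Gb x N k / P x N = (P x k)⁻¹ * (P x (N - k))⁻¹ := by
    intro N k h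
    unfold Gb
    rw [if_pos h, div_right_comm, div_self (P_ne_zero hx N), one_div, mul_inv]
  have hstepA : ∀ n : ℕ, q ^ (2 * n ^ 2) *
      (∏ j ∈ Finset.range n, (1 + 3 * q ^ (2 * j + 1) + q ^ (4 * j + 2))) /
      qPoch (q ^ 2) (q ^ 2) (2 * n) = ∑ p ∈ Finset.HasAntidiagonal.antidiagonal n, g p := by
    intro n
    rw [Finset.Nat.sum_antidiagonal_eq_sum_range_succ_mk g n]
    rw [Finset.sum_range_succ' (fun k => g (k, n - k)) n]
    rw [qPoch_eq_P, ← hxdef, prod_pair hq hx n]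
    rw [mul_add, add_div]
    have hzeroterm : q ^ (2 * n ^ 2) * Gb x (2 * n) n / P x (2 * n) = g (0, n - 0) := by
      simp only [hg, ccoef, Nat.sub_zero]
      rw [mul_div_assoc, hGdiv (by omega : n ≤ 2 * n), show 2 * n - n = n by omega]
      rw [show (0:ℕ) ^ 2 + 2 * (0 + n) ^ 2 = 2 * n ^ 2 by ring, show 2 * 0 + n = n by omega]
      simp
    have hrest : q ^ (2 * n ^ 2) *
        (∑ j ∈ range n, Lc (j + 1) * q ^ ((j + 1) ^ 2) * Gb x (2 * n) (n + 1 + j)) / P x (2 * n)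
        = ∑ j ∈ range n, g (j + 1, n - (j + 1)) := by
      rw [Finset.mul_sum, Finset.sum_div]
      apply Finset.sum_congr rfl
      intro j hj
      have hjn : j < n := Finset.mem_range.1 hj
      simp only [hg, ccoef, if_neg (Nat.succ_ne_zero j)]
      rw [show q ^ (2 * n ^ 2) * (Lc (j + 1) * q ^ ((j + 1) ^ 2) * Gb x (2 * n) (n + 1 + j)) / P x (2 * n)
          = Lc (j + 1) * (q ^ ((j + 1) ^ 2) * q ^ (2 * n ^ 2)) * (Gb x (2 * n) (n + 1 + j) / P x (2 * n)) by ring]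
      rw [hGdiv (by omega : n + 1 + j ≤ 2 * n), ← pow_add]
      rw [show 2 * n - (n + 1 + j) = n - (j + 1) by omega]
      rw [show (j + 1) ^ 2 + 2 * ((j + 1) + (n - (j + 1))) ^ 2 = (j + 1) ^ 2 + 2 * n ^ 2 by
        rw [show (j + 1) + (n - (j + 1)) = n by omega]]
      rw [show 2 * (j + 1) + (n - (j + 1)) = n + 1 + j by omega]
      ring
    rw [hzeroterm, hrest, add_comm]
  -- Step B: sum over all n
  have e := Finset.HasAntidiagonal.sigmaAntidiagonalEquivProd (A := ℕ)
  have hsig : Summable (g ∘ Finset.HasAntidiagonal.sigmaAntidiagonalEquivProd) :=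
    (Equiv.summable_iff _).2 hgsum
  have hstepB : ∑' n : ℕ, ∑ p ∈ Finset.HasAntidiagonal.antidiagonal n, g p = ∑' p : ℕ × ℕ, g p := by
    have h1 : ∀ n : ℕ, ∑ p ∈ Finset.HasAntidiagonal.antidiagonal n, g p
        = ∑' c : Finset.HasAntidiagonal.antidiagonal n, g ↑c :=
      fun n => (Finset.tsum_subtype (Finset.HasAntidiagonal.antidiagonal n) g).symm
    calc ∑' n : ℕ, ∑ p ∈ Finset.HasAntidiagonal.antidiagonal n, g p
        = ∑' n : ℕ, ∑' c : Finset.HasAntidiagonal.antidiagonal n, g ↑c := tsum_congr h1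
      _ = ∑' σ : Σ n : ℕ, {p // p ∈ Finset.HasAntidiagonal.antidiagonal n},
            g (Finset.HasAntidiagonal.sigmaAntidiagonalEquivProd σ) :=
          (hsig.tsum_sigma' (fun b => (hasSum_fintype _).summable)).symm
      _ = ∑' p : ℕ × ℕ, g p := Equiv.tsum_eq Finset.HasAntidiagonal.sigmaAntidiagonalEquivProd g
  -- Step C: iterated sum and Durfee
  have hstepC : ∑' p : ℕ × ℕ, g p
      = ∑' k : ℕ, ccoef k * q ^ (3 * k ^ 2) * (qPochInf x x)⁻¹ := by
    rw [hgsum.tsum_prod' hgsum.prod_factor]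
    apply tsum_congr
    intro k
    have hinner : ∀ m : ℕ, g (k, m)
        = ccoef k * q ^ (3 * k ^ 2) * (x ^ ((2 * k + m) * m) * ((P x m)⁻¹ * (P x (2 * k + m))⁻¹)) := by
      intro m
      simp only [hg]
      rw [hxdef, ← pow_mul, show q ^ (k ^ 2 + 2 * (k + m) ^ 2)
          = q ^ (3 * k ^ 2) * q ^ (2 * ((2 * k + m) * m)) from by rw [← pow_add]; congr 1; ring]
      ring
    rw [tsum_congr hinner, tsum_mul_left, durfee hx (2 * k)]
  -- Step D: peel off k = 0
  have hsumk : Summable (fun k : ℕ => ccoef k * q ^ (3 * k ^ 2) * (qPochInf x x)⁻¹) := by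
    apply Summable.of_norm_bounded (g := fun k => (16 * 4 ^ k * a ^ (3 * k ^ 2)) * ‖(qPochInf x x)⁻¹‖)
      ((summable_u ha0 hq).mul_right _)
    intro k
    rw [norm_mul, norm_mul, norm_pow]
    apply mul_le_mul_of_nonneg_right _ (norm_nonneg _)
    exact mul_le_mul (ccoef_norm k) le_rfl (by positivity) (by positivity)
  rw [tsum_congr hstepA, hstepB, hstepC, hsumk.tsum_eq_zero_add]
  rw [show ccoef 0 * q ^ (3 * 0 ^ 2) * (qPochInf x x)⁻¹ = (qPochInf x x)⁻¹ by
    simp [ccoef]]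
  have hfinal : ∀ k : ℕ, ccoef (k + 1) * q ^ (3 * (k + 1) ^ 2) * (qPochInf x x)⁻¹
      = (qPochInf x x)⁻¹ * (q ^ (3 * (k + 1) ^ 2) *
        ((Nat.fib (2 * (k + 1) + 1) : ℂ) + (Nat.fib (2 * (k + 1) - 1) : ℂ))) := by
    intro k
    have hcc : ccoef (k + 1) = (Nat.fib (2 * (k + 1) + 1) : ℂ) + (Nat.fib (2 * (k + 1) - 1) : ℂ) := by
      unfold ccoef
      rw [if_neg (Nat.succ_ne_zero k), Lc_fib k]
      rw [show 2 * (k + 1) + 1 = 2 * k + 3 by omega, show 2 * (k + 1) - 1 = 2 * k + 1 by omega]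
    rw [hcc]
    ring
  rw [tsum_congr hfinal, tsum_mul_left]
  rw [one_div, mul_add, mul_one]
end Main

end Stmt5

theorem stmt5 (q : ℂ) (hq : ‖q‖ < 1) :
    (∑' n : ℕ, q ^ (2 * n ^ 2) *
        (∏ j ∈ Finset.range n, (1 + 3 * q ^ (2 * j + 1) + q ^ (4 * j + 2))) /
        qPoch (q ^ 2) (q ^ 2) (2 * n)) =
      (1 / qPochInf (q ^ 2) (q ^ 2)) *
        (1 + ∑' n : ℕ, q ^ (3 * (n + 1) ^ 2) *
          ((Nat.fib (2 * (n + 1) + 1) : ℂ) + (Nat.fib (2 * (n + 1) - 1) : ℂ))) := by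
  have hq' : ‖q‖ < 1 := hq
  exact Stmt5.main hq'
end

section
/- Let q be a complex number with |q| < 1. Then ∑_{n=0}^{∞} q^{n²} (−q²;q⁴)_n / ((q;q²)_n (q⁴;q⁴)_n) = (−q;q²)_∞ (q⁸;q⁸)_∞ (q⁸;q¹⁶)_∞ / (q²;q²)_∞. -/
open Finset

set_option maxHeartbeats 2000000

namespace SlaterAux

lemma one_sub_ne {x : ℂ} (h : ‖x‖ < 1) : 1 - x ≠ 0 := by
  intro hx
  have : (1 : ℂ) = x := by linear_combination hx
  rw [← this] at h
  simp at h

lemma qPoch_succ (a t : ℂ) (n : ℕ) :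
    qPoch a t (n + 1) = qPoch a t n * (1 - a * t ^ n) := Finset.prod_range_succ _ _

lemma qPoch_ne_zero {a t : ℂ} (h : ∀ i, 1 - a * t ^ i ≠ 0) (n : ℕ) : qPoch a t n ≠ 0 :=
  Finset.prod_ne_zero_iff.2 fun i _ => h i

lemma norm_qPoch_le {a t : ℂ} {c : ℝ} (h : ∀ i, ‖a * t ^ i‖ ≤ c) (n : ℕ) :
    ‖qPoch a t n‖ ≤ (1 + c) ^ n := by
  rw [qPoch, norm_prod]
  calc ∏ i ∈ range n, ‖1 - a * t ^ i‖ ≤ ∏ i ∈ range n, (1 + c) := by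
        apply Finset.prod_le_prod (fun i _ => norm_nonneg _) (fun i _ => ?_)
        calc ‖1 - a * t ^ i‖ ≤ ‖(1:ℂ)‖ + ‖a * t ^ i‖ := norm_sub_le _ _
        _ ≤ 1 + c := by rw [norm_one]; linarith [h i]
    _ = (1 + c) ^ n := by rw [Finset.prod_const, Finset.card_range]

lemma le_norm_qPoch {a t : ℂ} {c : ℝ} (h : ∀ i, ‖a * t ^ i‖ ≤ c) (hc : c ≤ 1) (n : ℕ) :
    (1 - c) ^ n ≤ ‖qPoch a t n‖ := by
  rw [qPoch, norm_prod]
  calc ((1:ℝ) - c) ^ n = ∏ i ∈ range n, (1 - c) := by rw [Finset.prod_const, Finset.card_range]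
    _ ≤ ∏ i ∈ range n, ‖1 - a * t ^ i‖ := by
        apply Finset.prod_le_prod (fun i _ => by linarith) (fun i _ => ?_)
        calc (1:ℝ) - c ≤ 1 - ‖a * t ^ i‖ := by linarith [h i]
        _ = ‖(1:ℂ)‖ - ‖a * t ^ i‖ := by rw [norm_one]
        _ ≤ ‖1 - a * t ^ i‖ := norm_sub_norm_le _ _

/-- ratio-test helper -/
lemma summable_ratio {E : Type*} [NormedAddCommGroup E] [CompleteSpace E]
    (f : ℕ → E) (r K : ℝ) (hr0 : 0 ≤ r) (hr : r < 1)
    (h : ∀ n, ‖f (n + 1)‖ ≤ r ^ n * K * ‖f n‖) : Summable f := by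
  apply summable_of_ratio_norm_eventually_le (r := 1/2) (by norm_num)
  have h0 : Filter.Tendsto (fun n : ℕ => r ^ n * K) Filter.atTop (nhds 0) := by
    simpa using (tendsto_pow_atTop_nhds_zero_of_lt_one hr0 hr).mul_const K
  filter_upwards [h0.eventually_le_const (by norm_num : (0:ℝ) < 1/2)] with n hn
  calc ‖f (n + 1)‖ ≤ r ^ n * K * ‖f n‖ := h n
    _ ≤ 1/2 * ‖f n‖ := by
        exact mul_le_mul_of_nonneg_right hn (norm_nonneg _)

lemma summable_pow_sq {r K : ℝ} (hr0 : 0 ≤ r) (hr : r < 1) (hK : 0 ≤ K) :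
    Summable (fun n : ℕ => r ^ (n ^ 2) * K ^ n) := by
  apply summable_ratio _ (r ^ 2) (r * K) (by positivity) (by nlinarith)
  intro n
  have : r ^ ((n+1)^2) * K ^ (n+1) = (r^2)^n * (r * K) * (r ^ (n^2) * K ^ n) := by ring
  rw [Real.norm_eq_abs, Real.norm_eq_abs, abs_of_nonneg (by positivity),
    abs_of_nonneg (by positivity), this]



lemma hasProd_zero_of_eq_zero {f : ℕ → ℂ} (i₀ : ℕ) (h : f i₀ = 0) : HasProd f 0 := by
  rw [HasProd]
  apply Filter.Tendsto.congr' _ tendsto_const_nhds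
  filter_upwards [Filter.eventually_ge_atTop ({i₀} : Finset ℕ)] with s hs
  exact (Finset.prod_eq_zero (hs (Finset.mem_singleton_self i₀)) h).symm

lemma summable_log_one_sub {a t : ℂ} (ht : ‖t‖ < 1) (h : ∀ i, 1 - a * t ^ i ≠ 0) :
    Summable (fun i : ℕ => Complex.log (1 - a * t ^ i)) := by
  apply Summable.of_norm_bounded_eventually (g := fun i => 3/2 * (‖a‖ * ‖t‖ ^ i))
  · exact ((summable_geometric_of_lt_one (norm_nonneg t) ht).mul_left ‖a‖).mul_left (3/2)
  · rw [Nat.cofinite_eq_atTop]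
    have h0 : Filter.Tendsto (fun i : ℕ => ‖a‖ * ‖t‖ ^ i) Filter.atTop (nhds 0) := by
      simpa using (tendsto_pow_atTop_nhds_zero_of_lt_one (norm_nonneg t) ht).const_mul ‖a‖
    filter_upwards [h0.eventually_le_const (by norm_num : (0:ℝ) < 1/2)] with i hi
    have hn : ‖-(a * t ^ i)‖ ≤ 1/2 := by
      rw [norm_neg, norm_mul, norm_pow]; exact hi
    calc ‖Complex.log (1 - a * t ^ i)‖ = ‖Complex.log (1 + -(a * t ^ i))‖ := by ring_nf
      _ ≤ 3/2 * ‖-(a * t ^ i)‖ := Complex.norm_log_one_add_half_le_self hn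
      _ ≤ 3/2 * (‖a‖ * ‖t‖ ^ i) := by rw [norm_neg, norm_mul, norm_pow]

lemma multipliable_one_sub (a t : ℂ) (ht : ‖t‖ < 1) :
    Multipliable (fun i : ℕ => 1 - a * t ^ i) := by
  by_cases h : ∀ i, 1 - a * t ^ i ≠ 0
  · exact Complex.multipliable_of_summable_log (summable_log_one_sub ht h)
  · push_neg at h
    obtain ⟨i₀, hi₀⟩ := h
    exact ⟨0, hasProd_zero_of_eq_zero i₀ hi₀⟩

lemma tprod_one_sub_ne_zero {a t : ℂ} (ht : ‖t‖ < 1) (h : ∀ i, 1 - a * t ^ i ≠ 0) :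
    (∏' i : ℕ, (1 - a * t ^ i)) ≠ 0 := by
  have this : Complex.exp (∑' i : ℕ, Complex.log (1 - a * t ^ i)) = ∏' i : ℕ, (1 - a * t ^ i) :=
    Complex.cexp_tsum_eq_tprod h (summable_log_one_sub ht h)
  rw [← this]
  exact Complex.exp_ne_zero _

/-- The master q-exponential template. -/
lemma qexp {r : ℂ} (s : ℂ) (hr : ‖r‖ < 1) (β : ℕ → ℂ) (hb0 : β 0 = 1)
    (hrec : ∀ j, β (j + 1) * (1 - r ^ (j + 1)) = s * r ^ j * β j) (z : ℂ) :
    ∑' j : ℕ, β j * z ^ j = ∏' i : ℕ, (1 - (-s * z) * r ^ i) := by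
  have hr1 : (0:ℝ) < 1 - ‖r‖ := by linarith
  -- bound on coefficient growth
  have hb : ∀ j, ‖β (j + 1)‖ ≤ ‖s‖ / (1 - ‖r‖) * ‖r‖ ^ j * ‖β j‖ := by
    intro j
    have h1 : 1 - ‖r‖ ≤ ‖1 - r ^ (j + 1)‖ := by
      have hpow : ‖r‖ ^ (j+1) ≤ ‖r‖ := by
        simpa using pow_le_pow_of_le_one (norm_nonneg r) hr.le (show 1 ≤ j + 1 by omega)
      calc 1 - ‖r‖ ≤ 1 - ‖r ^ (j+1)‖ := by rw [norm_pow]; linarith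
        _ = ‖(1:ℂ)‖ - ‖r ^ (j+1)‖ := by rw [norm_one]
        _ ≤ ‖1 - r ^ (j+1)‖ := norm_sub_norm_le _ _
    have h2 : ‖β (j + 1)‖ * ‖1 - r ^ (j + 1)‖ = ‖s‖ * ‖r‖ ^ j * ‖β j‖ := by
      rw [← norm_mul, hrec j, norm_mul, norm_mul, norm_pow]
    rw [div_mul_eq_mul_div, div_mul_eq_mul_div, le_div_iff₀ hr1]
    calc ‖β (j + 1)‖ * (1 - ‖r‖) ≤ ‖β (j + 1)‖ * ‖1 - r ^ (j + 1)‖ :=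
          mul_le_mul_of_nonneg_left h1 (norm_nonneg _)
      _ = ‖s‖ * ‖r‖ ^ j * ‖β j‖ := h2
  -- summability
  have hsum : ∀ w : ℂ, Summable (fun j => β j * w ^ j) := by
    intro w
    apply summable_ratio _ ‖r‖ (‖s‖ / (1 - ‖r‖) * ‖w‖) (norm_nonneg r) hr
    intro j
    calc ‖β (j+1) * w ^ (j+1)‖ = ‖β (j+1)‖ * (‖w‖^j * ‖w‖) := by
          rw [norm_mul, norm_pow, pow_succ]
      _ ≤ (‖s‖ / (1 - ‖r‖) * ‖r‖ ^ j * ‖β j‖) * (‖w‖^j * ‖w‖) := by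
          apply mul_le_mul_of_nonneg_right (hb j) (by positivity)
      _ = ‖r‖ ^ j * (‖s‖ / (1 - ‖r‖) * ‖w‖) * ‖β j * w ^ j‖ := by
          rw [norm_mul, norm_pow]; ring
  have hsumnorm : ∀ w : ℂ, Summable (fun j => ‖β j * w ^ j‖) := by
    intro w
    apply summable_ratio (fun j => ‖β j * w ^ j‖) ‖r‖ (‖s‖ / (1 - ‖r‖) * ‖w‖) (norm_nonneg r) hr
    intro j
    rw [norm_norm, norm_norm]
    calc ‖β (j+1) * w ^ (j+1)‖ = ‖β (j+1)‖ * (‖w‖^j * ‖w‖) := by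
          rw [norm_mul, norm_pow, pow_succ]
      _ ≤ (‖s‖ / (1 - ‖r‖) * ‖r‖ ^ j * ‖β j‖) * (‖w‖^j * ‖w‖) := by
          apply mul_le_mul_of_nonneg_right (hb j) (by positivity)
      _ = ‖r‖ ^ j * (‖s‖ / (1 - ‖r‖) * ‖w‖) * ‖β j * w ^ j‖ := by
          rw [norm_mul, norm_pow]; ring
  set g : ℂ → ℂ := fun w => ∑' j : ℕ, β j * w ^ j with hgdef
  have hgapp : ∀ u : ℂ, g u = ∑' j : ℕ, β j * u ^ j := fun u => rfl
  have hshiftsum : ∀ w : ℂ, Summable (fun j => β (j+1) * w ^ (j+1)) := by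
    intro w
    exact ((hsum w).comp_injective (add_left_injective 1) : _)
  have hshift : ∀ w : ℂ, (∑' j : ℕ, β (j+1) * w ^ (j+1)) = g w - 1 := by
    intro w
    have h0 := Summable.tsum_eq_zero_add (hsum w)
    rw [hb0] at h0
    simp only [pow_zero, one_mul] at h0
    have : g w = 1 + ∑' j : ℕ, β (j+1) * w ^ (j+1) := h0
    linear_combination -this
  have hfe : ∀ w : ℂ, g w = (1 + s * w) * g (r * w) := by
    intro w
    have e1 : ∀ j : ℕ, β j * (r*w)^j * (s*w)
        = β (j+1) * w^(j+1) - β (j+1) * (r*w)^(j+1) := by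
      intro j
      calc β j * (r*w)^j * (s*w) = (s * r^j * β j) * w^j * w := by rw [mul_pow]; ring
        _ = (β (j+1) * (1 - r^(j+1))) * w^j * w := by rw [hrec j]
        _ = β (j+1) * w^(j+1) - β (j+1) * (r*w)^(j+1) := by
            rw [mul_pow, pow_succ, pow_succ]; ring
    have h2 : s * w * g (r*w) = ∑' j : ℕ, β j * (r*w)^j * (s*w) := by
      rw [hgapp, tsum_mul_right]
      ring
    have h3 : (∑' j : ℕ, β j * (r*w)^j * (s*w)) = (g w - 1) - (g (r*w) - 1) := by
      rw [tsum_congr e1, Summable.tsum_sub (hshiftsum w) (hshiftsum (r*w)), hshift w, hshift (r*w)]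
    have : (1 + s*w) * g (r*w) = g (r*w) + s * w * g (r*w) := by ring
    rw [this, h2, h3]; ring
  have hiter : ∀ N : ℕ, g z = (∏ i ∈ range N, (1 - (-s*z) * r^i)) * g (r^N * z) := by
    intro N
    induction N with
    | zero => simp
    | succ N ih =>
      have h1 := hfe (r ^ N * z)
      rw [show r * (r ^ N * z) = r ^ (N+1) * z by ring] at h1
      rw [ih, h1, prod_range_succ]
      ring
  have hmul : Multipliable (fun i : ℕ => 1 - (-s*z) * r^i) := multipliable_one_sub _ _ hr
  have hP := hmul.hasProd.tendsto_prod_nat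
  set C : ℝ := ∑' j : ℕ, ‖β (j+1) * z ^ (j+1)‖ with hCdef
  have hsnz : Summable (fun j => ‖β (j+1) * z ^ (j+1)‖) := by
    exact ((hsumnorm z).comp_injective (add_left_injective 1) : _)
  have hbnd : ∀ N : ℕ, ‖g (r^N * z) - 1‖ ≤ ‖r‖^N * C := by
    intro N
    rw [← hshift (r^N * z)]
    have hrN1 : ‖r‖ ^ N ≤ 1 := pow_le_one₀ (norm_nonneg r) hr.le
    have hsn : Summable (fun j => ‖β (j+1) * (r^N * z) ^ (j+1)‖) := by
      exact ((hsumnorm (r^N*z)).comp_injective (add_left_injective 1) : _)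
    calc ‖∑' j : ℕ, β (j+1) * (r^N * z)^(j+1)‖
        ≤ ∑' j : ℕ, ‖β (j+1) * (r^N * z)^(j+1)‖ := norm_tsum_le_tsum_norm hsn
      _ ≤ ∑' j : ℕ, ‖r‖^N * ‖β (j+1) * z^(j+1)‖ := by
          apply Summable.tsum_le_tsum _ hsn (hsnz.mul_left _)
          intro j
          have : ‖β (j+1) * (r^N * z)^(j+1)‖
              = (‖r‖^N)^(j+1) * ‖β (j+1) * z^(j+1)‖ := by
            rw [norm_mul, norm_mul, mul_pow, norm_mul, norm_pow, norm_pow, norm_pow]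
            ring
          rw [this]
          apply mul_le_mul_of_nonneg_right _ (norm_nonneg _)
          exact pow_le_of_le_one (by positivity) hrN1 (by omega)
      _ = ‖r‖^N * C := tsum_mul_left
  have hG : Filter.Tendsto (fun N : ℕ => g (r^N * z)) Filter.atTop (nhds 1) := by
    have h0 : Filter.Tendsto (fun N : ℕ => ‖r‖^N * C) Filter.atTop (nhds 0) := by
      simpa using (tendsto_pow_atTop_nhds_zero_of_lt_one (norm_nonneg r) hr).mul_const C
    have h1 : Filter.Tendsto (fun N : ℕ => g (r^N * z) - 1) Filter.atTop (nhds 0) :=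
      squeeze_zero_norm hbnd h0
    have := h1.add_const 1
    simpa using this
  have hfinal := hP.mul hG
  rw [mul_one] at hfinal
  have hconst : (fun N : ℕ => (∏ i ∈ range N, (1 - (-s*z) * r^i)) * g (r^N * z))
      = fun _ => g z := funext fun N => (hiter N).symm
  rw [hconst] at hfinal
  exact tendsto_nhds_unique tendsto_const_nhds hfinal



lemma norm_pow_lt {q : ℂ} (hq : ‖q‖ < 1) {k : ℕ} (hk : k ≠ 0) : ‖q ^ k‖ < 1 := by
  rw [norm_pow]; exact pow_lt_one₀ (norm_nonneg q) hq hk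

lemma one_sub_pow_ne {q : ℂ} (hq : ‖q‖ < 1) {k : ℕ} (hk : k ≠ 0) : 1 - q ^ k ≠ 0 :=
  one_sub_ne (norm_pow_lt hq hk)

lemma euler1 {q : ℂ} (hq : ‖q‖ < 1) :
    ∑' k : ℕ, (q^4)^(k^2) / qPoch (q^8) (q^8) k = ∏' i : ℕ, (1 + q^4 * (q^8)^i) := by
  have h8 : ‖(q^8 : ℂ)‖ < 1 := norm_pow_lt hq (by norm_num)
  have hP : ∀ k, qPoch (q^8) (q^8) k ≠ 0 := by
    intro k
    apply qPoch_ne_zero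
    intro i
    have : q^8 * (q^8)^i = q^(8*(i+1)) := by ring
    rw [this]
    exact one_sub_pow_ne hq (by positivity)
  have key := qexp (r := q^8) (q^4) h8
      (fun k => (q^4)^(k^2) / qPoch (q^8) (q^8) k)
      (by simp [qPoch]) ?hrec 1
  · have keyL : (∑' k : ℕ, (q^4)^(k^2) / qPoch (q^8) (q^8) k)
        = ∑' k : ℕ, ((q^4)^(k^2) / qPoch (q^8) (q^8) k) * (1:ℂ)^k :=
      tsum_congr (fun k => by simp)
    rw [keyL, key]
    exact tprod_congr (fun i => by ring)
  case hrec =>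
    intro k
    show ((q^4)^((k+1)^2) / qPoch (q^8) (q^8) (k+1)) * (1 - (q^8)^(k+1))
      = q^4 * (q^8)^k * ((q^4)^(k^2) / qPoch (q^8) (q^8) k)
    have hsucc : qPoch (q^8) (q^8) (k+1) = qPoch (q^8) (q^8) k * (1 - q^8 * (q^8)^k) :=
      qPoch_succ _ _ _
    have hne : (1 : ℂ) - q^8 * (q^8)^k ≠ 0 := by
      have : q^8 * (q^8)^k = q^(8*(k+1)) := by ring
      rw [this]; exact one_sub_pow_ne hq (by positivity)
    have hexp : (q^4 : ℂ)^((k+1)^2) = q^4 * (q^8)^k * (q^4)^(k^2) := by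
      rw [show (k+1)^2 = k^2 + (2*k+1) by ring, pow_add]
      ring
    rw [hsucc, hexp]
    have h1 : ((q^8 : ℂ))^(k+1) = q^8 * (q^8)^k := by rw [pow_succ]; ring
    rw [h1]
    field_simp [hP k, hne]

lemma euler2 {q : ℂ} (hq : ‖q‖ < 1) (z : ℂ) :
    ∏' i : ℕ, (1 - z * (q^2)^i)
      = ∑' j : ℕ, ((-1)^j * q^(j*(j-1)) / qPoch (q^2) (q^2) j) * z^j := by
  have h2 : ‖(q^2 : ℂ)‖ < 1 := norm_pow_lt hq (by norm_num)
  have hP : ∀ k, qPoch (q^2) (q^2) k ≠ 0 := by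
    intro k
    apply qPoch_ne_zero
    intro i
    have : q^2 * (q^2)^i = q^(2*(i+1)) := by ring
    rw [this]
    exact one_sub_pow_ne hq (by positivity)
  have key := qexp (r := q^2) (-1) h2
      (fun j => (-1)^j * q^(j*(j-1)) / qPoch (q^2) (q^2) j)
      (by simp [qPoch]) ?hrec z
  · rw [key]
    apply tprod_congr; intro i
    ring
  case hrec =>
    intro j
    show ((-1)^(j+1) * q^((j+1)*((j+1)-1)) / qPoch (q^2) (q^2) (j+1)) * (1 - (q^2)^(j+1))
      = -1 * (q^2)^j * ((-1)^j * q^(j*(j-1)) / qPoch (q^2) (q^2) j)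
    have hsucc : qPoch (q^2) (q^2) (j+1) = qPoch (q^2) (q^2) j * (1 - q^2 * (q^2)^j) :=
      qPoch_succ _ _ _
    have hne : (1 : ℂ) - q^2 * (q^2)^j ≠ 0 := by
      have : q^2 * (q^2)^j = q^(2*(j+1)) := by ring
      rw [this]; exact one_sub_pow_ne hq (by positivity)
    have hexp : (q : ℂ)^((j+1)*j) = (q^2)^j * q^(j*(j-1)) := by
      rw [show (j+1)*j = j*(j-1) + 2*j by cases j <;> simp <;> ring, pow_add]
      ring
    have h1 : ((q^2 : ℂ))^(j+1) = q^2 * (q^2)^j := by rw [pow_succ]; ring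
    rw [hsucc, h1]
    have hm1 : ((-1 : ℂ))^(j+1) = -(-1)^j := by rw [pow_succ]; ring
    rw [hm1, show (j+1)*((j+1)-1) = (j+1)*j by simp, hexp]
    field_simp [hP j, hne]


/-! ### The finite key lemma -/

noncomputable def pp (Q : ℂ) (n : ℕ) : ℂ := qPoch (-Q) (Q^2) n / qPoch (Q^2) (Q^2) n
noncomputable def ee (Q : ℂ) (j : ℕ) : ℂ := (-1)^j / qPoch Q Q j
noncomputable def cc (Q : ℂ) (m : ℕ) : ℂ := ∑ n ∈ Finset.range (m+1), pp Q n * ee Q (m - n)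

section Key
variable {Q : ℂ} (hQ : ‖Q‖ < 1)
include hQ

lemma qPochQ_ne (j : ℕ) : qPoch Q Q j ≠ 0 := by
  apply qPoch_ne_zero; intro i
  rw [show Q * Q^i = Q^(i+1) by rw [pow_succ]; ring]
  exact one_sub_pow_ne hQ (by omega)

lemma qPochQ2_ne (n : ℕ) : qPoch (Q^2) (Q^2) n ≠ 0 := by
  apply qPoch_ne_zero; intro i
  rw [show Q^2 * (Q^2)^i = Q^(2*i+2) by ring]
  exact one_sub_pow_ne hQ (by omega)

lemma qPochQ4_ne (k : ℕ) : qPoch (Q^4) (Q^4) k ≠ 0 := by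
  apply qPoch_ne_zero; intro i
  rw [show Q^4 * (Q^4)^i = Q^(4*i+4) by ring]
  exact one_sub_pow_ne hQ (by omega)

lemma ee_zero : ee Q 0 = 1 := by simp [ee, qPoch]

lemma pp_zero : pp Q 0 = 1 := by simp [pp, qPoch]

lemma ee_one : ee Q 1 = -1 / (1 - Q) := by
  have : qPoch Q Q 1 = 1 - Q := by simp [qPoch]
  rw [ee, this]
  norm_num

lemma pp_one : pp Q 1 = (1 + Q) / (1 - Q^2) := by
  have h1 : qPoch (-Q) (Q^2) 1 = 1 + Q := by simp [qPoch]
  have h2 : qPoch (Q^2) (Q^2) 1 = 1 - Q^2 := by simp [qPoch]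
  rw [pp, h1, h2]

lemma ee_rec (j : ℕ) : ee Q j = -(1 - Q^(j+1)) * ee Q (j+1) := by
  have h1 : qPoch Q Q (j+1) = qPoch Q Q j * (1 - Q^(j+1)) := by
    rw [qPoch_succ, show Q * Q^j = Q^(j+1) by rw [pow_succ]; ring]
  have h2 := qPochQ_ne hQ j
  have h3 : (1:ℂ) - Q^(j+1) ≠ 0 := one_sub_pow_ne hQ (by omega)
  rw [ee, ee, h1, mul_div_assoc', div_eq_div_iff h2 (mul_ne_zero h2 h3)]
  ring

lemma pp_rec (n : ℕ) : pp Q (n+1) * (1 - Q^(2*n+2)) = pp Q n * (1 + Q^(2*n+1)) := by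
  have h1 : qPoch (-Q) (Q^2) (n+1) = qPoch (-Q) (Q^2) n * (1 + Q^(2*n+1)) := by
    rw [qPoch_succ, show 1 - -Q * (Q^2)^n = 1 + Q^(2*n+1) by ring]
  have h2 : qPoch (Q^2) (Q^2) (n+1) = qPoch (Q^2) (Q^2) n * (1 - Q^(2*n+2)) := by
    rw [qPoch_succ, show 1 - Q^2 * (Q^2)^n = 1 - Q^(2*n+2) by ring]
  rw [pp, pp, h1, h2]
  have h3 := qPochQ2_ne hQ n
  have h4 : (1:ℂ) - Q^(2*n+2) ≠ 0 := one_sub_pow_ne hQ (by omega)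
  field_simp

lemma cc_rec (m : ℕ) : cc Q (m+2) * (1 - Q^(2*m+4)) = cc Q m := by
  set H : ℕ → ℂ := fun n =>
    if n ≤ m + 2 then (Q^(n+m+2) - Q^(m+2-n)) * pp Q n * ee Q (m+2-n) else 0 with hH
  have htel : ∑ n ∈ range (m+3), (H (n+1) - H n) = H (m+3) - H 0 :=
    Finset.sum_range_sub H (m+3)
  have hH0 : H 0 = 0 := by simp [hH]
  have hHtop : H (m+3) = 0 := by simp [hH]
  -- rewrite cc (m+2) * (...) - cc m as a sum of D n
  have hccm2 : cc Q (m+2) * (1 - Q^(2*m+4))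
      = ∑ n ∈ range (m+3), (1 - Q^(2*m+4)) * (pp Q n * ee Q (m+2-n)) := by
    rw [cc, Finset.sum_mul]
    apply Finset.sum_congr rfl
    intro n _; ring
  have hccm : cc Q m
      = ∑ n ∈ range (m+3), (if n ≤ m then pp Q n * ee Q (m-n) else 0) := by
    rw [cc]
    rw [Finset.sum_congr rfl (fun n hn => ?_)]
    · apply Finset.sum_subset
      · intro x hx; simp only [Finset.mem_range] at *; omega
      · intro x _ hx; simp only [Finset.mem_range] at hx
        rw [if_neg (by omega)]
    · simp only [Finset.mem_range] at hn
      rw [if_pos (by omega)]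
  have hlocal : ∀ n ∈ range (m+3),
      (1 - Q^(2*m+4)) * (pp Q n * ee Q (m+2-n))
        - (if n ≤ m then pp Q n * ee Q (m-n) else 0) = H (n+1) - H n := by
    intro n hn
    simp only [Finset.mem_range] at hn
    rcases (by omega : n ≤ m ∨ n = m + 1 ∨ n = m + 2) with hc | hc | hc
    · -- main case
      obtain ⟨j, hj⟩ : ∃ j, m = n + j := ⟨m - n, by omega⟩
      subst hj
      rw [if_pos hc]
      rw [hH]
      simp only
      rw [if_pos (by omega : n + 1 ≤ n + j + 2), if_pos (by omega : n ≤ n + j + 2)]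
      rw [show n + j + 2 - (n+1) = j+1 by omega, show n + j + 2 - n = j+2 by omega,
        show n + j - n = j by omega]
      have e2 : ee Q j = -(1 - Q^(j+1)) * ee Q (j+1) := ee_rec hQ j
      have e1 : ee Q (j+1) = -(1 - Q^(j+2)) * ee Q (j+2) := by
        have := ee_rec hQ (j+1)
        rwa [show j+1+1 = j+2 by omega] at this
      have h4 : (1:ℂ) - Q^(2*n+2) ≠ 0 := one_sub_pow_ne hQ (by omega)
      have hp : pp Q (n+1) = pp Q n * (1 + Q^(2*n+1)) / (1 - Q^(2*n+2)) := by
        rw [eq_div_iff h4]; exact pp_rec hQ n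
      rw [e2, e1, hp]
      field_simp
      ring
    · -- n = m+1
      subst hc
      rw [if_neg (by omega)]
      rw [hH]
      simp only
      rw [if_pos (by omega : m+1+1 ≤ m+2), if_pos (by omega : m+1 ≤ m+2)]
      rw [show m + 2 - (m+1+1) = 0 by omega, show m+2-(m+1) = 1 by omega]
      have h4 : (1:ℂ) - Q^(2*m+4) ≠ 0 := one_sub_pow_ne hQ (by omega)
      have h1 : (1:ℂ) - Q ≠ 0 := one_sub_ne hQ
      have hp : pp Q (m+1+1) = pp Q (m+1) * (1 + Q^(2*m+3)) / (1 - Q^(2*m+4)) := by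
        rw [eq_div_iff h4]
        have := pp_rec hQ (m+1)
        rwa [show 2*(m+1)+2 = 2*m+4 by ring, show 2*(m+1)+1 = 2*m+3 by ring] at this
      rw [hp, ee_zero hQ, ee_one hQ]
      field_simp
      ring
    · -- n = m+2
      subst hc
      rw [if_neg (by omega)]
      rw [hH]
      simp only
      rw [if_neg (by omega : ¬ m+2+1 ≤ m+2), if_pos (le_refl (m+2)),
        show m+2-(m+2) = 0 by omega, ee_zero hQ, pow_zero]
      ring
  have : cc Q (m+2) * (1 - Q^(2*m+4)) - cc Q m = 0 := by
    rw [hccm2, hccm, ← Finset.sum_sub_distrib]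
    rw [Finset.sum_congr rfl hlocal, htel, hH0, hHtop, sub_zero]
  linear_combination this

lemma cc_closed : ∀ k : ℕ, cc Q (2*k) = (qPoch (Q^4) (Q^4) k)⁻¹ ∧ cc Q (2*k+1) = 0 := by
  intro k
  induction k with
  | zero =>
    constructor
    · simp [cc, pp_zero hQ, ee_zero hQ, qPoch]
    · have h1 : (1:ℂ) - Q ≠ 0 := one_sub_ne hQ
      have h2 : (1:ℂ) - Q^2 ≠ 0 := one_sub_pow_ne hQ (by omega)
      have hcc1 : cc Q 1 = pp Q 0 * ee Q 1 + pp Q 1 * ee Q 0 := by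
        simp [cc, Finset.sum_range_succ]
      rw [hcc1, pp_zero hQ, ee_zero hQ, ee_one hQ, pp_one hQ]
      field_simp
      ring
  | succ k ih =>
    obtain ⟨ihe, iho⟩ := ih
    have h44 : (1:ℂ) - Q^(4*k+4) ≠ 0 := one_sub_pow_ne hQ (by omega)
    have h46 : (1:ℂ) - Q^(4*k+6) ≠ 0 := one_sub_pow_ne hQ (by omega)
    constructor
    · have hr := cc_rec hQ (2*k)
      rw [show 2*(2*k)+4 = 4*k+4 by ring, ihe] at hr
      have hq4 : qPoch (Q^4) (Q^4) (k+1) = qPoch (Q^4) (Q^4) k * (1 - Q^(4*k+4)) := by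
        rw [qPoch_succ, show Q^4 * (Q^4)^k = Q^(4*k+4) by ring]
      rw [show 2*(k+1) = 2*k+2 by ring, hq4]
      have hk4 := qPochQ4_ne hQ k
      field_simp at hr ⊢
      linear_combination hr
    · have hr := cc_rec hQ (2*k+1)
      rw [show 2*(2*k+1)+4 = 4*k+6 by ring, iho] at hr
      have := mul_eq_zero.1 hr
      rcases this with h | h
      · rwa [show 2*(k+1)+1 = 2*k+1+2 by ring]
      · exact absurd h h46

end Key

/-! ### Product manipulation lemmas -/

lemma qPochInf_pair {a t : ℂ} (ht : ‖t‖ < 1) :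
    qPochInf a t * qPochInf (-a) t = qPochInf (a^2) (t^2) := by
  rw [qPochInf, qPochInf, qPochInf,
    ← Multipliable.tprod_mul (multipliable_one_sub a t ht) (multipliable_one_sub (-a) t ht)]
  exact tprod_congr (fun i => by ring)

lemma qPochInf_evenodd {a t : ℂ} (ht : ‖t‖ < 1) :
    qPochInf a t = qPochInf a (t^2) * qPochInf (a*t) (t^2) := by
  have ht2 : ‖(t^2 : ℂ)‖ < 1 := by
    rw [norm_pow]
    calc ‖t‖^2 ≤ ‖t‖ := by nlinarith [norm_nonneg t]
      _ < 1 := ht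
  have he : Multipliable (fun k : ℕ => 1 - a * t^(2*k)) := by
    have : (fun k : ℕ => 1 - a * t^(2*k)) = (fun k : ℕ => 1 - a * (t^2)^k) :=
      funext (fun k => by rw [pow_mul])
    rw [this]; exact multipliable_one_sub _ _ ht2
  have ho : Multipliable (fun k : ℕ => 1 - a * t^(2*k+1)) := by
    have : (fun k : ℕ => 1 - a * t^(2*k+1)) = (fun k : ℕ => 1 - (a*t) * (t^2)^k) :=
      funext (fun k => by rw [pow_succ, pow_mul]; ring)
    rw [this]; exact multipliable_one_sub _ _ ht2
  calc qPochInf a t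
      = (∏' k : ℕ, (1 - a * t^(2*k))) * ∏' k : ℕ, (1 - a * t^(2*k+1)) :=
        (tprod_even_mul_odd (f := fun i : ℕ => 1 - a * t^i) he ho).symm
    _ = qPochInf a (t^2) * qPochInf (a*t) (t^2) := by
        rw [qPochInf, qPochInf]
        congr 1
        · exact tprod_congr (fun k => by rw [pow_mul])
        · exact tprod_congr (fun k => by rw [pow_succ, pow_mul]; ring)

end SlaterAux


open SlaterAux in
theorem stmt11 (q : ℂ) (hq : ‖q‖ < 1) :
    (∑' n : ℕ, q ^ (n ^ 2) * qPoch (-q ^ 2) (q ^ 4) n /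
        (qPoch q (q ^ 2) n * qPoch (q ^ 4) (q ^ 4) n)) =
      qPochInf (-q) (q ^ 2) * qPochInf (q ^ 8) (q ^ 8) * qPochInf (q ^ 8) (q ^ 16) /
        qPochInf (q ^ 2) (q ^ 2) := by
  have hq' : ‖q‖ < 1 := by exact hq
  have hq1 : ‖q‖ ≤ 1 := hq'.le
  have hq0 : (0:ℝ) ≤ ‖q‖ := norm_nonneg q
  have hc : (0:ℝ) < 1 - ‖q‖ := by linarith
  have hKa : (0:ℝ) ≤ 2/(1-‖q‖) := div_nonneg (by norm_num) hc.le
  have hKb : (0:ℝ) ≤ 1/(1-‖q‖) := div_nonneg (by norm_num) hc.le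
  have h2 : ‖(q^2 : ℂ)‖ < 1 := norm_pow_lt hq' (by norm_num)
  -- basic nonvanishing
  have hDq : ∀ n, qPoch q (q^2) n ≠ 0 := by
    intro n; apply qPoch_ne_zero; intro i
    rw [show q * (q^2)^i = q^(2*i+1) by ring]
    exact one_sub_pow_ne hq' (by omega)
  have hD4 : ∀ n, qPoch (q^4) (q^4) n ≠ 0 := by
    intro n; apply qPoch_ne_zero; intro i
    rw [show q^4 * (q^4)^i = q^(4*i+4) by ring]
    exact one_sub_pow_ne hq' (by omega)
  have hD2 : ∀ n, qPoch (q^2) (q^2) n ≠ 0 := by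
    intro n; apply qPoch_ne_zero; intro i
    rw [show q^2 * (q^2)^i = q^(2*i+2) by ring]
    exact one_sub_pow_ne hq' (by omega)
  -- the double-sum term
  set g : ℕ × ℕ → ℂ := fun p => q^((p.1+p.2)^2) * pp (q^2) p.1 * ee (q^2) p.2 with hgdef
  -- pp and ee in q-notation
  have hpp : ∀ n, pp (q^2) n = qPoch (-q^2) (q^4) n / qPoch (q^4) (q^4) n := by
    intro n; rw [pp, show ((q^2:ℂ)^2) = q^4 by ring]
  have hee : ∀ j, ee (q^2) j = (-1)^j / qPoch (q^2) (q^2) j := fun j => rfl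
  -- norm bounds
  have hppbound : ∀ n, ‖pp (q^2) n‖ ≤ (2/(1-‖q‖))^n := by
    intro n
    rw [hpp n, norm_div, div_pow]
    apply div_le_div₀ (by positivity)
    · calc ‖qPoch (-q^2) (q^4) n‖ ≤ (1+1)^n := by
            apply norm_qPoch_le; intro i
            rw [show -q^2 * (q^4)^i = -(q^(4*i+2)) by ring, norm_neg, norm_pow]
            exact pow_le_one₀ hq0 hq1
        _ = 2^n := by norm_num
    · exact pow_pos hc n
    · apply le_norm_qPoch _ hq1
      intro i
      rw [show q^4 * (q^4)^i = q^(4*i+4) by ring, norm_pow]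
      calc ‖q‖^(4*i+4) ≤ ‖q‖^1 := pow_le_pow_of_le_one hq0 hq1 (by omega)
        _ = ‖q‖ := pow_one _
  have heebound : ∀ j, ‖ee (q^2) j‖ ≤ (1/(1-‖q‖))^j := by
    intro j
    rw [hee j, norm_div, div_pow, one_pow]
    have h1 : ‖((-1:ℂ))^j‖ = 1 := by simp
    rw [h1]
    apply div_le_div₀ (by norm_num) le_rfl (pow_pos hc j)
    apply le_norm_qPoch _ hq1
    intro i
    rw [show q^2 * (q^2)^i = q^(2*i+2) by ring, norm_pow]
    calc ‖q‖^(2*i+2) ≤ ‖q‖^1 := pow_le_pow_of_le_one hq0 hq1 (by omega)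
      _ = ‖q‖ := pow_one _
  -- summability of g
  have hu : Summable (fun n : ℕ => ‖q‖^(n^2) * (2/(1-‖q‖))^n) :=
    summable_pow_sq hq0 hq' hKa
  have hv : Summable (fun j : ℕ => ‖q‖^(j^2) * (1/(1-‖q‖))^j) :=
    summable_pow_sq hq0 hq' hKb
  have hg : Summable g := by
    apply Summable.of_norm_bounded
      (g := fun p : ℕ × ℕ => (‖q‖^(p.1^2) * (2/(1-‖q‖))^p.1) * (‖q‖^(p.2^2) * (1/(1-‖q‖))^p.2))
      (hu.mul_of_nonneg hv (fun n => mul_nonneg (pow_nonneg hq0 _) (pow_nonneg hKa _))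
        (fun j => mul_nonneg (pow_nonneg hq0 _) (pow_nonneg hKb _)))
    rintro ⟨n, j⟩
    have h1 : ‖g (n, j)‖ = ‖q‖^((n+j)^2) * ‖pp (q^2) n‖ * ‖ee (q^2) j‖ := by
      rw [hgdef]; simp [norm_mul, norm_pow]
    rw [h1]
    have h2' : ‖q‖^((n+j)^2) ≤ ‖q‖^(n^2) * ‖q‖^(j^2) := by
      rw [← pow_add]
      exact pow_le_pow_of_le_one hq0 hq1 (by nlinarith [Nat.zero_le (n*j)])
    have step1 : ‖q‖^((n+j)^2) * ‖pp (q^2) n‖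
        ≤ (‖q‖^(n^2) * ‖q‖^(j^2)) * (2/(1-‖q‖))^n :=
      mul_le_mul h2' (hppbound n) (norm_nonneg _)
        (mul_nonneg (pow_nonneg hq0 _) (pow_nonneg hq0 _))
    have step2 : ‖q‖^((n+j)^2) * ‖pp (q^2) n‖ * ‖ee (q^2) j‖
        ≤ ((‖q‖^(n^2) * ‖q‖^(j^2)) * (2/(1-‖q‖))^n) * (1/(1-‖q‖))^j :=
      mul_le_mul step1 (heebound j) (norm_nonneg _)
        (mul_nonneg (mul_nonneg (pow_nonneg hq0 _) (pow_nonneg hq0 _)) (pow_nonneg hKa _))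
    refine step2.trans (le_of_eq ?_)
    ring
  -- split the infinite product W
  set W : ℂ := qPochInf q (q^2) with hW
  have hsplit : ∀ n : ℕ, W = qPoch q (q^2) n * ∏' i : ℕ, (1 - q^(2*n+1) * (q^2)^i) := by
    intro n
    have hcongr : (fun i : ℕ => 1 - q * (q^2)^(i+n)) = (fun i : ℕ => 1 - q^(2*n+1) * (q^2)^i) :=
      funext (fun i => by rw [show q * (q^2)^(i+n) = q^(2*n+1) * (q^2)^i by
        rw [pow_add]; ring])
    have hm : Multipliable (fun i : ℕ => 1 - q * (q^2)^(i+n)) := by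
      rw [hcongr]; exact multipliable_one_sub _ _ h2
    have hkey := Multipliable.prod_mul_tprod_nat_mul' (f := fun i : ℕ => 1 - q * (q^2)^i) (k := n) hm
    rw [hW, qPochInf, ← hkey, qPoch]
    congr 1
    rw [hcongr]
  -- exponent identity
  have hexp : ∀ n j : ℕ, n^2 + (j*(j-1) + (2*n+1)*j) = (n+j)^2 := by
    intro n j
    cases j with
    | zero => simp
    | succ i =>
      have h1 : (i+1)*((i+1)-1) = (i+1)*i := by simp
      rw [h1]; ring
  -- termwise expansion
  have hterm : ∀ n : ℕ,
      q ^ (n^2) * qPoch (-q^2) (q^4) n / (qPoch q (q^2) n * qPoch (q^4) (q^4) n) * W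
        = ∑' j : ℕ, g (n, j) := by
    intro n
    rw [hsplit n]
    have h3 : q ^ (n^2) * qPoch (-q^2) (q^4) n / (qPoch q (q^2) n * qPoch (q^4) (q^4) n)
        * (qPoch q (q^2) n * (∏' i : ℕ, (1 - q^(2*n+1) * (q^2)^i)))
        = q^(n^2) * pp (q^2) n * (∏' i : ℕ, (1 - q^(2*n+1) * (q^2)^i)) := by
      rw [hpp n]
      field_simp [hDq n, hD4 n]
    rw [h3, euler2 hq' (q^(2*n+1)), ← tsum_mul_left]
    apply tsum_congr
    intro j
    rw [hgdef]
    simp only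
    rw [hee j]
    have hpw : (q:ℂ)^((n+j)^2) = q^(n^2) * (q^(j*(j-1)) * (q^(2*n+1))^j) := by
      rw [← pow_mul, ← pow_add, ← pow_add, hexp n j]
    rw [hpw]
    ring
  -- A * W as a double sum
  have hAW : (∑' n : ℕ, q ^ (n^2) * qPoch (-q^2) (q^4) n /
        (qPoch q (q^2) n * qPoch (q^4) (q^4) n)) * W = ∑' p : ℕ × ℕ, g p := by
    rw [← tsum_mul_right, tsum_congr hterm]
    exact (Summable.tsum_prod' hg (fun n => hg.prod_factor n)).symm
  -- regroup along antidiagonals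
  have hsummable_sigma :
      Summable (fun x : Σ m : ℕ, Finset.HasAntidiagonal.antidiagonal m =>
        g (Finset.HasAntidiagonal.sigmaAntidiagonalEquivProd x)) :=
    (Equiv.summable_iff _).2 hg
  have hinner : ∀ m : ℕ,
      (∑' c : Finset.HasAntidiagonal.antidiagonal m, g (Finset.HasAntidiagonal.sigmaAntidiagonalEquivProd ⟨m, c⟩))
        = q^(m^2) * cc (q^2) m := by
    intro m
    have h0 : ∀ c : Finset.HasAntidiagonal.antidiagonal m,
        g (Finset.HasAntidiagonal.sigmaAntidiagonalEquivProd ⟨m, c⟩) = g c.val := fun c => rfl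
    rw [tsum_congr h0, Finset.tsum_subtype (Finset.HasAntidiagonal.antidiagonal m) g,
      Finset.Nat.sum_antidiagonal_eq_sum_range_succ_mk, cc, Finset.mul_sum]
    apply Finset.sum_congr rfl
    intro i hi
    simp only [Finset.mem_range] at hi
    rw [hgdef]
    simp only
    rw [show i + (m - i) = m by omega]
    ring
  set ff : ℕ → ℂ := fun m => q^(m^2) * cc (q^2) m with hff
  have hsigma : (∑' p : ℕ × ℕ, g p) = ∑' m : ℕ, ff m := by
    rw [← Equiv.tsum_eq Finset.HasAntidiagonal.sigmaAntidiagonalEquivProd g, Summable.tsum_sigma hsummable_sigma]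
    exact tsum_congr hinner
  have hcc := cc_closed h2
  have hfs : Summable ff := (hsummable_sigma.sigma).congr hinner
  have he2 : Summable (fun k : ℕ => ff (2*k)) :=
    hfs.comp_injective (fun a b h => by omega)
  have ho2 : Summable (fun k : ℕ => ff (2*k+1)) :=
    hfs.comp_injective (fun a b h => by omega)
  have hodd : ∀ k : ℕ, ff (2*k+1) = 0 := by
    intro k
    show q^((2*k+1)^2) * cc (q^2) (2*k+1) = 0
    rw [(hcc k).2, mul_zero]
  have heven : ∀ k : ℕ, ff (2*k) = (q^4)^(k^2) / qPoch (q^8) (q^8) k := by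
    intro k
    show q^((2*k)^2) * cc (q^2) (2*k) = _
    rw [(hcc k).1, show ((q^2:ℂ)^4) = q^8 by ring,
      show (2*k)^2 = 4*(k^2) by ring, pow_mul, div_eq_mul_inv]
  have hsum_f : (∑' m : ℕ, ff m)
      = ∑' k : ℕ, (q^4)^(k^2) / qPoch (q^8) (q^8) k := by
    rw [← tsum_even_add_odd he2 ho2, tsum_congr hodd, tsum_zero, add_zero,
      tsum_congr heven]
  have hprodE : (∏' i : ℕ, (1 + q^4 * (q^8)^i)) = qPochInf (-(q^4)) (q^8) := by
    rw [qPochInf]; exact tprod_congr (fun i => by ring)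
  have hAWE : (∑' n : ℕ, q ^ (n^2) * qPoch (-q^2) (q^4) n /
        (qPoch q (q^2) n * qPoch (q^4) (q^4) n)) * W = qPochInf (-(q^4)) (q^8) := by
    rw [hAW, hsigma, hsum_f, euler1 hq', hprodE]
  -- product identities
  have h4n : ‖(q^4:ℂ)‖ < 1 := norm_pow_lt hq' (by norm_num)
  have h8n : ‖(q^8:ℂ)‖ < 1 := norm_pow_lt hq' (by norm_num)
  have I1 : W * qPochInf (-q) (q^2) = qPochInf (q^2) (q^4) := by
    have hpair := qPochInf_pair (a := q) (t := q^2) h2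
    rwa [show ((q^2:ℂ)^2) = q^4 by ring] at hpair
  have I2 : qPochInf (q^2) (q^2) = qPochInf (q^2) (q^4) * qPochInf (q^4) (q^4) := by
    have hev := qPochInf_evenodd (a := q^2) (t := q^2) h2
    rwa [show ((q^2:ℂ)^2) = q^4 by ring, show (q^2:ℂ)*(q^2) = q^4 by ring] at hev
  have I3 : qPochInf (q^4) (q^4) = qPochInf (q^4) (q^8) * qPochInf (q^8) (q^8) := by
    have hev := qPochInf_evenodd (a := q^4) (t := q^4) h4n
    rwa [show ((q^4:ℂ)^2) = q^8 by ring, show (q^4:ℂ)*(q^4) = q^8 by ring] at hev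
  have I4 : qPochInf (q^4) (q^8) * qPochInf (-(q^4)) (q^8) = qPochInf (q^8) (q^16) := by
    have hpair := qPochInf_pair (a := q^4) (t := q^8) h8n
    rwa [show ((q^4:ℂ)^2) = q^8 by ring, show ((q^8:ℂ)^2) = q^16 by ring] at hpair
  -- nonvanishing of the products
  have NZW : W ≠ 0 := by
    rw [hW, qPochInf]
    apply tprod_one_sub_ne_zero h2
    intro i
    rw [show q * (q^2)^i = q^(2*i+1) by ring]
    exact one_sub_pow_ne hq' (by omega)
  have NZmq : qPochInf (-q) (q^2) ≠ 0 := by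
    rw [qPochInf]
    apply tprod_one_sub_ne_zero h2
    intro i
    rw [show -q * (q^2)^i = -(q^(2*i+1)) by ring, sub_neg_eq_add]
    intro hcon
    have : ‖(1:ℂ) + q^(2*i+1)‖ > 0 := by
      have h1 : ‖(q:ℂ)^(2*i+1)‖ < 1 := norm_pow_lt hq' (by omega)
      calc (0:ℝ) < 1 - ‖(q:ℂ)^(2*i+1)‖ := by linarith
        _ = ‖(1:ℂ)‖ - ‖(q:ℂ)^(2*i+1)‖ := by rw [norm_one]
        _ ≤ ‖(1:ℂ) + q^(2*i+1)‖ := by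
            have := norm_sub_norm_le (1:ℂ) (-(q^(2*i+1)))
            simpa using this
    rw [hcon] at this
    simp at this
  have NZ48 : qPochInf (q^4) (q^8) ≠ 0 := by
    rw [qPochInf]
    apply tprod_one_sub_ne_zero h8n
    intro i
    rw [show q^4 * (q^8)^i = q^(8*i+4) by ring]
    exact one_sub_pow_ne hq' (by omega)
  have NZ88 : qPochInf (q^8) (q^8) ≠ 0 := by
    rw [qPochInf]
    apply tprod_one_sub_ne_zero h8n
    intro i
    rw [show q^8 * (q^8)^i = q^(8*i+8) by ring]
    exact one_sub_pow_ne hq' (by omega)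
  have NZ22 : qPochInf (q^2) (q^2) ≠ 0 := by
    rw [qPochInf]
    apply tprod_one_sub_ne_zero h2
    intro i
    rw [show q^2 * (q^2)^i = q^(2*i+2) by ring]
    exact one_sub_pow_ne hq' (by omega)
  -- finish
  apply mul_right_cancel₀ NZW
  rw [hAWE]
  have hRW : qPochInf (-q) (q^2) * qPochInf (q^8) (q^8) * qPochInf (q^8) (q^16) /
      qPochInf (q^2) (q^2) * W = qPochInf (-(q^4)) (q^8) := by
    rw [← I4, I2, I3, ← I1]
    field_simp
  rw [hRW]
end

section
/- Let q be a complex number with 0 < |q| < 1 and let n be a natural number. Then ∑_{j=−n−1}^{n} q^{2j²+j} · ([2n+1 choose n−j]_{q²})² = (1 + q^{2n+1}) · [4n+1 choose 2n]_q. -/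
open Finset Polynomial

lemma qq_succ (q : ℂ) (n : ℕ) : qPoch q q (n+1) = qPoch q q n * (1 - q ^ (n+1)) := by
  rw [qPoch, Finset.prod_range_succ, ← qPoch, pow_succ']

lemma one_sub_pow_ne {q : ℂ} (h1 : ‖q‖ < 1) (i : ℕ) : (1 : ℂ) - q ^ (i+1) ≠ 0 := by
  intro h
  have h2 : q ^ (i+1) = 1 := by linear_combination -h
  have : ‖q ^ (i+1)‖ < 1 := by
    rw [norm_pow]; exact pow_lt_one₀ (norm_nonneg _) h1 (Nat.succ_ne_zero i)
  rw [h2] at this; simp at this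

lemma qPoch_ne {q : ℂ} (h1 : ‖q‖ < 1) (n : ℕ) : qPoch q q n ≠ 0 := by
  rw [qPoch]
  apply Finset.prod_ne_zero_iff.2
  intro i _
  have := one_sub_pow_ne h1 i
  rwa [pow_succ'] at this

lemma qPoch_zero (q : ℂ) : qPoch q q 0 = 1 := by simp [qPoch]

lemma gauss_zero (q : ℂ) (h1 : ‖q‖ < 1) (m : ℕ) : gauss q m 0 = 1 := by
  rw [gauss, qPoch_zero, Nat.sub_zero, one_mul, div_self (qPoch_ne h1 m)]

lemma gauss_self (q : ℂ) (h1 : ‖q‖ < 1) (m : ℕ) : gauss q m m = 1 := by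
  rw [gauss, Nat.sub_self, qPoch_zero, mul_one, div_self (qPoch_ne h1 m)]

lemma gauss_symm (q : ℂ) (m k : ℕ) (hk : k ≤ m) : gauss q m (m - k) = gauss q m k := by
  rw [gauss, gauss, Nat.sub_sub_self hk, mul_comm]

lemma pascal_core (P A B a b : ℂ) (hA : A ≠ 0) (hB : B ≠ 0) (ha : (1:ℂ) - a ≠ 0) (hb : (1:ℂ) - b ≠ 0) :
    P * ((1-b) + b*(1-a)) / (A*(1-a) * (B*(1-b))) = P/(A*(1-a)*B) + b * (P/(A*(B*(1-b)))) := by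
  field_simp

lemma gauss_pascal (q : ℂ) (h1 : ‖q‖ < 1) (N k : ℕ) (hk : k + 1 ≤ N) :
    gauss q (N+1) (k+1) = gauss q N (k+1) + q^(N-k) * gauss q N k := by
  have hNk : N + 1 - (k+1) = N - k := by omega
  have h3 : N - k = (N - k - 1) + 1 := by omega
  have hNk2 : N - (k+1) = N - k - 1 := by omega
  have hab : q^(k+1) * q^(N-k-1+1) = q^(N+1) := by rw [← pow_add]; congr 1; omega
  have key : (1:ℂ) - q^(N+1) = (1 - q^(N-k-1+1)) + q^(N-k-1+1) * (1 - q^(k+1)) := by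
    linear_combination hab
  rw [gauss, gauss, gauss, hNk, hNk2, h3, qq_succ q N, qq_succ q k, qq_succ q (N-k-1), key]
  exact pascal_core _ _ _ _ _ (qPoch_ne h1 k) (qPoch_ne h1 _) (one_sub_pow_ne h1 k)
    (one_sub_pow_ne h1 _)

lemma choose_two_succ (k : ℕ) : (k+1).choose 2 = k.choose 2 + k := by
  have h := Nat.choose_succ_succ k 1
  simp [Nat.choose_one_right] at h
  omega

lemma cauchy (q : ℂ) (h1 : ‖q‖ < 1) (p : Polynomial ℂ) (N : ℕ) :
    ∏ i ∈ Finset.range N, (Polynomial.C (q ^ i) * p + 1) =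
    ∑ k ∈ Finset.range (N+1), Polynomial.C (q ^ (k.choose 2) * gauss q N k) * p ^ k := by
  induction N with
  | zero => simp [gauss_zero q h1]
  | succ N ih =>
    rw [Finset.prod_range_succ, ih]
    have hsplit : (∑ k ∈ range (N+1), Polynomial.C (q ^ (k.choose 2) * gauss q N k) * p ^ k) *
          (Polynomial.C (q^N) * p + 1)
        = (∑ k ∈ range (N+1), Polynomial.C (q^N * (q ^ (k.choose 2) * gauss q N k)) * p ^ (k+1))
          + ∑ k ∈ range (N+1), Polynomial.C (q ^ (k.choose 2) * gauss q N k) * p ^ k := by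
      rw [mul_add, mul_one, Finset.sum_mul]
      congr 1
      refine Finset.sum_congr rfl fun k _ => ?_
      simp only [Polynomial.C_mul, pow_succ]
      ring
    rw [hsplit]
    rw [Finset.sum_range_succ
      (f := fun k => Polynomial.C (q^N * (q ^ (k.choose 2) * gauss q N k)) * p ^ (k+1))]
    rw [Finset.sum_range_succ'
      (f := fun k => Polynomial.C (q ^ (k.choose 2) * gauss q N k) * p ^ k)]
    conv_rhs => rw [Finset.sum_range_succ', Finset.sum_range_succ]
    have hmid : ∀ k ∈ range N,
        Polynomial.C (q^N * (q ^ (k.choose 2) * gauss q N k)) * p ^ (k+1)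
          + Polynomial.C (q ^ ((k+1).choose 2) * gauss q N (k+1)) * p ^ (k+1)
        = Polynomial.C (q ^ ((k+1).choose 2) * gauss q (N+1) (k+1)) * p ^ (k+1) := by
      intro k hk
      have hkN : k + 1 ≤ N := Nat.succ_le_of_lt (Finset.mem_range.1 hk)
      have hpow : q^((k+1).choose 2) * q^(N-k) = q^N * q^(k.choose 2) := by
        rw [← pow_add, ← pow_add]; congr 1; rw [choose_two_succ]; omega
      have hC : Polynomial.C (q^((k+1).choose 2)) * Polynomial.C (q^(N-k))
          = Polynomial.C (q^N) * Polynomial.C (q^(k.choose 2)) := by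
        rw [← Polynomial.C_mul, ← Polynomial.C_mul, hpow]
      rw [gauss_pascal q h1 N k hkN]
      simp only [Polynomial.C_mul, Polynomial.C_add, mul_add, add_mul]
      linear_combination (-(Polynomial.C (gauss q N k) * p^(k+1))) * hC
    have htop : Polynomial.C (q^N * (q ^ (N.choose 2) * gauss q N N)) * p ^ (N+1)
        = Polynomial.C (q ^ ((N+1).choose 2) * gauss q (N+1) (N+1)) * p ^ (N+1) := by
      rw [gauss_self q h1, gauss_self q h1, mul_one, mul_one, ← pow_add]
      rw [choose_two_succ]; ring_nf
    have hbot : Polynomial.C (q ^ ((0:ℕ).choose 2) * gauss q N 0) * p ^ 0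
        = Polynomial.C (q ^ ((0:ℕ).choose 2) * gauss q (N+1) 0) * p ^ 0 := by
      rw [gauss_zero q h1, gauss_zero q h1]
    have hsum : ∑ k ∈ range N,
        (Polynomial.C (q^N * (q ^ (k.choose 2) * gauss q N k)) * p ^ (k+1)
          + Polynomial.C (q ^ ((k+1).choose 2) * gauss q N (k+1)) * p ^ (k+1))
        = ∑ k ∈ range N, Polynomial.C (q ^ ((k+1).choose 2) * gauss q (N+1) (k+1)) * p ^ (k+1) :=
      Finset.sum_congr rfl hmid
    rw [Finset.sum_add_distrib] at hsum
    linear_combination hsum + htop + hbot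

lemma two_mul_choose_two (k : ℕ) : 2 * k.choose 2 = k * (k - 1) := by
  induction k with
  | zero => rfl
  | succ k ih =>
    rw [choose_two_succ, Nat.mul_add, ih, Nat.add_sub_cancel]
    cases k with
    | zero => rfl
    | succ m => simp [Nat.add_sub_cancel]; ring

lemma prod_split (f : ℕ → Polynomial ℂ) (m : ℕ) :
    ∏ i ∈ Finset.range (2*m), f i
      = (∏ j ∈ Finset.range m, f (2*j)) * ∏ j ∈ Finset.range m, f (2*j+1) := by
  induction m with
  | zero => simp
  | succ m ih =>
    have h : 2*(m+1) = (2*m+1)+1 := by omega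
    rw [h, Finset.prod_range_succ, Finset.prod_range_succ,
      Finset.prod_range_succ, Finset.prod_range_succ, ih]
    ring

lemma coeff_sum (c : ℕ → ℂ) (M m : ℕ) (hm : m < M) :
    (∑ k ∈ Finset.range M, Polynomial.C (c k) * Polynomial.X ^ k).coeff m = c m := by
  rw [Polynomial.finset_sum_coeff]
  simp only [Polynomial.coeff_C_mul, Polynomial.coeff_X_pow, mul_ite, mul_one, mul_zero]
  rw [Finset.sum_ite_eq (Finset.range M) m c]
  simp [hm]

lemma step_d (q : ℂ) (h1 : ‖q‖ < 1) (n : ℕ) :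
    gauss q (4*n+2) (2*n+1) = (1 + q^(2*n+1)) * gauss q (4*n+1) (2*n) := by
  have e1 : 4*n+2 - (2*n+1) = 2*n+1 := by omega
  have e2 : 4*n+1 - 2*n = 2*n+1 := by omega
  rw [gauss, gauss, e1, e2, show (4*n+2) = (4*n+1)+1 from rfl, qq_succ q (4*n+1),
    qq_succ q (2*n)]
  have hfac : (1:ℂ) - q^(4*n+1+1) = (1 - q^(2*n+1)) * (1 + q^(2*n+1)) := by
    have : q^(4*n+1+1) = q^(2*n+1) * q^(2*n+1) := by rw [← pow_add]; congr 1; omega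
    linear_combination this
  rw [hfac]
  have hP1 : qPoch q q (4*n+1) ≠ 0 := qPoch_ne h1 _
  have hP2 : qPoch q q (2*n) ≠ 0 := qPoch_ne h1 _
  have hu : (1:ℂ) - q^(2*n+1) ≠ 0 := one_sub_pow_ne h1 _
  field_simp

lemma cast_two_choose (k : ℕ) : ((2 * (k.choose 2) : ℕ) : ℤ) = (k:ℤ)^2 - (k:ℤ) := by
  rw [two_mul_choose_two]
  cases k with
  | zero => simp
  | succ m => push_cast [Nat.add_sub_cancel]; ring

theorem stmt19 (q : ℂ) (hq0 : 0 < ‖q‖) (hq1 : ‖q‖ < 1) (n : ℕ) :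
    (∑ j ∈ Finset.Icc (-(n : ℤ) - 1) (n : ℤ),
        q ^ (2 * j ^ 2 + j) * (gauss (q ^ 2) (2 * n + 1) ((n - j).toNat)) ^ 2) =
      (1 + q ^ (2 * n + 1)) * gauss q (4 * n + 1) (2 * n) := by
  have hq : q ≠ 0 := by
    intro h; rw [h] at hq0; simp at hq0
  have hq2 : ‖q^2‖ < 1 := by
    rw [norm_pow]; exact pow_lt_one₀ (norm_nonneg _) hq1 two_ne_zero
  -- coefficient of X^(2n+1) in the full product
  have cP : (∏ i ∈ range (2*(2*n+1)), (Polynomial.C (q ^ i) * Polynomial.X + 1)).coeff (2*n+1)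
      = q^((2*n+1).choose 2) * gauss q (2*(2*n+1)) (2*n+1) := by
    rw [cauchy q hq1 Polynomial.X (2*(2*n+1))]
    exact coeff_sum (fun k => q^(k.choose 2) * gauss q (2*(2*n+1)) k) _ _ (by omega)
  have hEO : (∏ i ∈ range (2*(2*n+1)), (Polynomial.C (q ^ i) * Polynomial.X + 1))
      = (∏ j ∈ range (2*n+1), (Polynomial.C ((q^2) ^ j) * Polynomial.X + 1))
        * ∏ j ∈ range (2*n+1), (Polynomial.C ((q^2) ^ j) * (Polynomial.C q * Polynomial.X) + 1) := by
    rw [prod_split]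
    congr 1
    · exact Finset.prod_congr rfl fun j _ => by rw [pow_mul]
    · refine Finset.prod_congr rfl fun j _ => ?_
      rw [pow_succ, pow_mul, Polynomial.C_mul, mul_assoc]
  have cE : ∀ a, a < 2*n+1+1 →
      (∏ j ∈ range (2*n+1), (Polynomial.C ((q^2) ^ j) * Polynomial.X + 1)).coeff a
        = (q^2)^(a.choose 2) * gauss (q^2) (2*n+1) a := by
    intro a ha
    rw [cauchy (q^2) hq2 Polynomial.X (2*n+1)]
    exact coeff_sum (fun k => (q^2)^(k.choose 2) * gauss (q^2) (2*n+1) k) _ _ (by omega)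
  have cO : ∀ b, b < 2*n+1+1 →
      (∏ j ∈ range (2*n+1), (Polynomial.C ((q^2) ^ j) * (Polynomial.C q * Polynomial.X) + 1)).coeff b
        = (q^2)^(b.choose 2) * gauss (q^2) (2*n+1) b * q^b := by
    intro b hb
    rw [cauchy (q^2) hq2 (Polynomial.C q * Polynomial.X) (2*n+1)]
    have : ∑ k ∈ range (2*n+1+1),
        Polynomial.C ((q^2) ^ (k.choose 2) * gauss (q^2) (2*n+1) k) * (Polynomial.C q * Polynomial.X) ^ k
        = ∑ k ∈ range (2*n+1+1),
          Polynomial.C ((q^2) ^ (k.choose 2) * gauss (q^2) (2*n+1) k * q^k) * Polynomial.X ^ k := by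
      refine Finset.sum_congr rfl fun k _ => ?_
      rw [mul_pow, ← Polynomial.C_pow, ← mul_assoc, ← Polynomial.C_mul]
    rw [this]
    exact coeff_sum (fun k => (q^2)^(k.choose 2) * gauss (q^2) (2*n+1) k * q^k) _ _ (by omega)
  have hA : ∑ a ∈ range (2*n+1+1),
      ((q^2)^(a.choose 2) * gauss (q^2) (2*n+1) a)
        * ((q^2)^((2*n+1-a).choose 2) * gauss (q^2) (2*n+1) (2*n+1-a) * q^(2*n+1-a))
      = q^((2*n+1).choose 2) * gauss q (2*(2*n+1)) (2*n+1) := by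
    rw [← cP, hEO, Polynomial.coeff_mul, Finset.Nat.sum_antidiagonal_eq_sum_range_succ_mk]
    refine Finset.sum_congr rfl fun a ha => ?_
    rw [cE a (Finset.mem_range.1 ha), cO (2*n+1-a) (by omega)]
  have hNc : (2*n+1).choose 2 = 2*n^2+n := by
    have h3 : 2 * ((2*n+1).choose 2) = 2 * (2*n^2+n) := by
      rw [two_mul_choose_two, Nat.add_sub_cancel]; ring
    omega
  -- main computation
  apply mul_left_cancel₀ (pow_ne_zero (2*n^2+n) hq)
  rw [Finset.mul_sum, ← step_d q hq1 n]
  have hA' : q^(2*n^2+n) * gauss q (4*n+2) (2*n+1)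
      = ∑ a ∈ range (2*n+1+1),
        ((q^2)^(a.choose 2) * gauss (q^2) (2*n+1) a)
          * ((q^2)^((2*n+1-a).choose 2) * gauss (q^2) (2*n+1) (2*n+1-a) * q^(2*n+1-a)) := by
    rw [← hNc, show (4*n+2) = 2*(2*n+1) by omega]
    exact hA.symm
  rw [hA']
  refine Finset.sum_nbij' (i := fun j => ((n:ℤ) + 1 + j).toNat)
    (j := fun a => (a:ℤ) - ((n:ℤ)+1)) ?_ ?_ ?_ ?_ ?_
  · intro j hj
    simp only [Finset.mem_Icc] at hj
    simp only [Finset.mem_range]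
    omega
  · intro a ha
    simp only [Finset.mem_range] at ha
    simp only [Finset.mem_Icc]
    omega
  · intro j hj
    simp only [Finset.mem_Icc] at hj
    omega
  · intro a ha
    simp only [Finset.mem_range] at ha
    omega
  · intro j hj
    simp only [Finset.mem_Icc] at hj
    have haz : ((((n:ℤ) + 1 + j).toNat : ℕ) : ℤ) = (n:ℤ)+1+j := by omega
    set a := ((n:ℤ) + 1 + j).toNat with ha
    have hble : a ≤ 2*n+1 := by omega
    have hb : ((n:ℤ) - j).toNat = 2*n+1 - a := by omega
    have hbz : ((2*n+1-a : ℕ) : ℤ) = (n:ℤ) - j := by omega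
    have hsym : gauss (q^2) (2*n+1) a = gauss (q^2) (2*n+1) (2*n+1-a) := by
      rw [← gauss_symm (q^2) (2*n+1) (2*n+1-a) (by omega),
        show 2*n+1 - (2*n+1-a) = a by omega]
    rw [hb, hsym]
    have key : q^(2*n^2+n) * (q:ℂ)^(2*j^2+j : ℤ)
        = q^(2*(a.choose 2) + (2*((2*n+1-a).choose 2) + (2*n+1-a))) := by
      have h1 : ((2*(a.choose 2) + (2*((2*n+1-a).choose 2) + (2*n+1-a)) : ℕ) : ℤ)
          = ((2*n^2+n : ℕ) : ℤ) + (2*j^2+j) := by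
        rw [Nat.cast_add, Nat.cast_add, cast_two_choose, cast_two_choose, haz, hbz]
        push_cast
        ring
      rw [← zpow_natCast q (2*n^2+n), ← zpow_add₀ hq, ← h1, zpow_natCast]
    calc q^(2*n^2+n) * ((q:ℂ)^(2*j^2+j : ℤ) * gauss (q^2) (2*n+1) (2*n+1-a) ^ 2)
        = (q^(2*n^2+n) * (q:ℂ)^(2*j^2+j : ℤ)) * gauss (q^2) (2*n+1) (2*n+1-a) ^ 2 := by
          ring
      _ = q^(2*(a.choose 2) + (2*((2*n+1-a).choose 2) + (2*n+1-a)))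
            * gauss (q^2) (2*n+1) (2*n+1-a) ^ 2 := by rw [key]
      _ = ((q^2)^(a.choose 2) * gauss (q^2) (2*n+1) (2*n+1-a))
            * ((q^2)^((2*n+1-a).choose 2) * gauss (q^2) (2*n+1) (2*n+1-a) * q^(2*n+1-a)) := by
          rw [pow_add, pow_add, pow_mul, pow_mul]
          ring
end
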